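/- arXiv:1210.4833 — 11 statements merged into one kernel-verified Lean document; each statement's English description precedes it below -/
import Mathlib

section
/- Let n ≥ 1 and m ≥ 3 be integers, and let μ = (μ_1,…,μ_n) ∈ ℂ^n be nonzero and NOT of the form c(e_a − e_b) for any scalar c ∈ ℂ and any pair of indices a ≠ b (where e_1,…,e_n are the standard basis vectors of ℂ^n). Then the polynomial ∑_{i=1}^{m} w_i · (h_i(λ_1,…,λ_n) − h_i(λ_1−μ_1,…,λ_n−μ_n)) is irreducible in the polynomial ring ℂ[w_1,…,w_m,λ_1,…,λ_n]. -/
/-!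
Under `ℂ[w, λ] ≃ ℂ[λ][w]` the polynomial becomes the linear form `∑ wᵢ gᵢ` with
`gᵢ = hᵢ(λ) - hᵢ(λ - μ)`, which is irreducible as soon as the `gᵢ` have no common non-unit
factor. If `∑ μⱼ ≠ 0`, then `g₁ = ∑ μⱼ` is a nonzero constant. Otherwise
`g₂ = ∑ μⱼ λⱼ - ½ ∑ μⱼ²` has degree one, hence is irreducible, so a common factor would make
`g₃` vanish on the hyperplane `g₂ = 0`. Writing `h₃` in power sums, `g₃` restricted to that
hyperplane is `∑ μⱼ λⱼ² - ∑ μⱼ² λⱼ + ⅓ ∑ μⱼ³`; its vanishing forces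
`μₐ μⱼ (μₐ + μⱼ) = 0` for all `a ≠ j`, which together with `∑ μⱼ = 0` and `μ ≠ 0` means
`μ = c (e_a - e_b)`.
-/

open MvPolynomial

/-- The complete homogeneous symmetric polynomial of degree `p` in `n` variables. -/
noncomputable def hpoly (n p : ℕ) : MvPolynomial (Fin n) ℂ :=
  ∑ d ∈ Finset.Nat.antidiagonalTuple n p, ∏ i, X i ^ d i

open Finset

section CompleteHomSum

variable {R : Type*}

def completeHomSum [CommSemiring R] (n p : ℕ) (x : Fin n → R) : R :=
  ∑ d ∈ Finset.Nat.antidiagonalTuple n p, ∏ i, x i ^ d i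

lemma map_completeHomSum {S F : Type*} [CommSemiring R] [CommSemiring S] [FunLike F R S]
    [RingHomClass F R S] (φ : F) (n p : ℕ) (x : Fin n → R) :
    φ (completeHomSum n p x) = completeHomSum n p (fun i => φ (x i)) := by
  simp [completeHomSum, map_sum, map_prod, map_pow]

lemma aeval_hpoly [CommSemiring R] [Algebra ℂ R] (n p : ℕ) (x : Fin n → R) :
    aeval x (hpoly n p) = completeHomSum n p x := by
  simp [hpoly, completeHomSum]

lemma sum_antidiagonalTuple_succ {M : Type*} [AddCommMonoid M] (k p : ℕ)
    (f : (Fin (k + 1) → ℕ) → M) :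
    ∑ d ∈ Finset.Nat.antidiagonalTuple (k + 1) p, f d =
      ∑ ij ∈ antidiagonal p, ∑ e ∈ Finset.Nat.antidiagonalTuple k ij.2, f (Fin.cons ij.1 e) := by
  rw [sum_sigma']
  refine (sum_bij' (fun a _ => Fin.cons a.1.1 a.2)
    (fun d _ => ⟨(d 0, ∑ i, Fin.tail d i), Fin.tail d⟩) ?_ ?_ ?_ ?_ fun _ _ => rfl).symm
  · rintro ⟨⟨i, j⟩, e⟩ h
    simp only [mem_sigma, HasAntidiagonal.mem_antidiagonal,
      Finset.Nat.mem_antidiagonalTuple] at h ⊢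
    rw [Fin.sum_cons, h.2, h.1]
  · intro d hd
    simp only [Finset.Nat.mem_antidiagonalTuple] at hd
    simp only [mem_sigma, HasAntidiagonal.mem_antidiagonal, Finset.Nat.mem_antidiagonalTuple,
      and_true]
    rw [← hd, Fin.sum_univ_succ]
    rfl
  · rintro ⟨⟨i, j⟩, e⟩ h
    simp only [mem_sigma, Finset.Nat.mem_antidiagonalTuple] at h
    simp [h.2]
  · intro d _
    simp

lemma completeHomSum_succ [CommSemiring R] (k p : ℕ) (x : Fin (k + 1) → R) :
    completeHomSum (k + 1) p x =
      ∑ j ∈ range (p + 1), x 0 ^ j * completeHomSum k (p - j) (fun i => x i.succ) := by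
  rw [completeHomSum, sum_antidiagonalTuple_succ,
    Finset.Nat.sum_antidiagonal_eq_sum_range_succ_mk]
  refine sum_congr rfl fun j _ => ?_
  rw [completeHomSum, mul_sum]
  refine sum_congr rfl fun e _ => ?_
  simp [Fin.prod_univ_succ]

lemma completeHomSum_zero [CommSemiring R] (n : ℕ) (x : Fin n → R) :
    completeHomSum n 0 x = 1 := by
  simp [completeHomSum, Finset.Nat.antidiagonalTuple_zero_right]

lemma completeHomSum_one [CommSemiring R] (n : ℕ) (x : Fin n → R) :
    completeHomSum n 1 x = ∑ i, x i := by
  induction n with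
  | zero => simp [completeHomSum]
  | succ k ih =>
    simp [completeHomSum_succ, sum_range_succ, ih, completeHomSum_zero, Fin.sum_univ_succ,
      add_comm]

lemma two_mul_completeHomSum_two [CommRing R] (n : ℕ) (x : Fin n → R) :
    2 * completeHomSum n 2 x = (∑ i, x i) ^ 2 + ∑ i, x i ^ 2 := by
  induction n with
  | zero => simp [completeHomSum]
  | succ k ih =>
    simp only [completeHomSum_succ, sum_range_succ, range_zero, sum_empty]
    norm_num [completeHomSum_zero, completeHomSum_one, Fin.sum_univ_succ]
    linear_combination ih (fun i => x i.succ)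

lemma six_mul_completeHomSum_three [CommRing R] (n : ℕ) (x : Fin n → R) :
    6 * completeHomSum n 3 x =
      (∑ i, x i) ^ 3 + 3 * (∑ i, x i) * (∑ i, x i ^ 2) + 2 * ∑ i, x i ^ 3 := by
  induction n with
  | zero => simp [completeHomSum]
  | succ k ih =>
    simp only [completeHomSum_succ, sum_range_succ, range_zero, sum_empty]
    norm_num [completeHomSum_zero, completeHomSum_one, Fin.sum_univ_succ]
    linear_combination
      ih (fun i => x i.succ) + 3 * x 0 * two_mul_completeHomSum_two k (fun i => x i.succ)

end CompleteHomSum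

section CompleteHomSumShift

variable {R : Type*} [CommRing R] {n : ℕ} (x μ : Fin n → R)

lemma completeHomSum_one_sub_shift :
    completeHomSum n 1 x - completeHomSum n 1 (fun j => x j - μ j) = ∑ j, μ j := by
  simp [completeHomSum_one]

lemma sum_sub_sq :
    ∑ j, (x j - μ j) ^ 2 = ∑ j, x j ^ 2 - 2 * ∑ j, μ j * x j + ∑ j, μ j ^ 2 := by
  simp only [mul_sum, ← sum_sub_distrib, ← sum_add_distrib]
  exact sum_congr rfl fun _ _ => by ring

lemma sum_sub_cube :
    ∑ j, (x j - μ j) ^ 3 =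
      ∑ j, x j ^ 3 - 3 * ∑ j, μ j * x j ^ 2 + 3 * ∑ j, μ j ^ 2 * x j - ∑ j, μ j ^ 3 := by
  simp only [mul_sum, ← sum_sub_distrib, ← sum_add_distrib]
  exact sum_congr rfl fun _ _ => by ring

variable {x μ}

lemma two_mul_completeHomSum_two_sub_shift (hμ : ∑ j, μ j = 0) :
    2 * (completeHomSum n 2 x - completeHomSum n 2 (fun j => x j - μ j)) =
      2 * ∑ j, μ j * x j - ∑ j, μ j ^ 2 := by
  have hsum : ∑ j, (x j - μ j) = ∑ j, x j := by simp [sum_sub_distrib, hμ]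
  rw [mul_sub, two_mul_completeHomSum_two, two_mul_completeHomSum_two, hsum, sum_sub_sq]
  ring

lemma six_mul_completeHomSum_three_sub_shift (hμ : ∑ j, μ j = 0) :
    6 * (completeHomSum n 3 x - completeHomSum n 3 (fun j => x j - μ j)) =
      3 * (∑ j, x j) * (2 * ∑ j, μ j * x j - ∑ j, μ j ^ 2) +
        6 * ∑ j, μ j * x j ^ 2 - 6 * ∑ j, μ j ^ 2 * x j + 2 * ∑ j, μ j ^ 3 := by
  have hsum : ∑ j, (x j - μ j) = ∑ j, x j := by simp [sum_sub_distrib, hμ]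
  rw [mul_sub, six_mul_completeHomSum_three, six_mul_completeHomSum_three, hsum, sum_sub_sq,
    sum_sub_cube]
  ring

end CompleteHomSumShift

section Quadric

variable {ι K : Type*} [Fintype ι] [DecidableEq ι] [Field K]

lemma mul_mul_add_eq_zero_of_forall_sum_mul_eq [CharZero K] {μ ν : ι → K} {c r : K}
    (h : ∀ lam : ι → K,
      ∑ k, μ k * lam k = c → ∑ k, μ k * lam k ^ 2 = ∑ k, ν k * lam k + r)
    {a j : ι} (haj : a ≠ j) : μ a * μ j * (μ a + μ j) = 0 := by
  rcases eq_or_ne (μ a) 0 with ha | ha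
  · simp [ha]
  -- A line inside the hyperplane; along it the quadric is a polynomial in `t` whose
  -- `t ^ 2`-coefficient is `μ a * μ j * (μ a + μ j)`.
  let lam (t : K) : ι → K := Pi.single a (c / μ a - t * μ j) + Pi.single j (t * μ a)
  have sum_lam (f : ι → K → K) (hf : ∀ k, f k 0 = 0) (t : K) :
      ∑ k, f k (lam t k) = f a (c / μ a - t * μ j) + f j (t * μ a) := by
    rw [Fintype.sum_eq_add a j haj fun k hk => by simp [lam, hk.1, hk.2, hf]]
    simp [lam, haj, haj.symm]
  have hq (t : K) := h (lam t) (by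
    rw [sum_lam (fun k y => μ k * y) (by simp)]
    field_simp
    ring)
  simp only [sum_lam (fun k y => μ k * y ^ 2) (by simp),
    sum_lam (fun k y => ν k * y) (by simp)] at hq
  have h2 : 2 * (μ a * μ j * (μ a + μ j)) = 0 := by
    linear_combination hq 1 + hq (-1) - 2 * hq 0
  simpa using h2

lemma exists_eq_smul_single_sub_single [CharZero K] {μ : ι → K} (hμ0 : μ ≠ 0)
    (hμ : ∑ k, μ k = 0) (h : ∀ a j, a ≠ j → μ a * μ j * (μ a + μ j) = 0) :
    ∃ (c : K) (a b : ι), a ≠ b ∧ μ = c • (Pi.single a 1 - Pi.single b 1) := by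
  obtain ⟨a, ha⟩ := Function.ne_iff.1 hμ0
  rw [Pi.zero_apply] at ha
  obtain ⟨b, hba, hb⟩ : ∃ b, b ≠ a ∧ μ b ≠ 0 := by
    by_contra! H
    exact ha (by rw [← hμ, Fintype.sum_eq_single a H])
  have hab : μ b = -μ a := by
    have := h a b hba.symm
    simp only [mul_eq_zero, ha, hb, false_or] at this
    linear_combination this
  refine ⟨μ a, a, b, hba.symm, funext fun k => ?_⟩
  by_cases hka : k = a
  · simp [hka, hba.symm]
  by_cases hkb : k = b
  · simp [hkb, hba, hab]
  suffices μ k = 0 by simp [hka, hkb, this]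
  by_contra hk
  have h1 := h a k (Ne.symm hka)
  have h2 := h b k (Ne.symm hkb)
  simp only [mul_eq_zero, ha, hb, hk, false_or] at h1 h2
  have h2a : 2 * μ a = 0 := by linear_combination h1 - h2 + hab
  simp [ha] at h2a

end Quadric

section ShiftDiff

variable {K : Type*} [Field K] {n : ℕ}

noncomputable def shiftDiff (μ : Fin n → K) (p : ℕ) : MvPolynomial (Fin n) K :=
  completeHomSum n p X - completeHomSum n p (fun j => X j - C (μ j))

lemma eval_shiftDiff (μ lam : Fin n → K) (p : ℕ) :
    eval lam (shiftDiff μ p) =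
      completeHomSum n p lam - completeHomSum n p (fun j => lam j - μ j) := by
  simp [shiftDiff, map_completeHomSum]

lemma shiftDiff_one (μ : Fin n → K) : shiftDiff μ 1 = C (∑ j, μ j) := by
  rw [shiftDiff, completeHomSum_one_sub_shift, map_sum]

lemma shiftDiff_two [CharZero K] {μ : Fin n → K} (hμ : ∑ j, μ j = 0) :
    shiftDiff μ 2 = ∑ j, C (μ j) * X j - C ((∑ j, μ j ^ 2) / 2) := by
  refine mul_left_cancel₀ (two_ne_zero (α := MvPolynomial (Fin n) K)) ?_
  rw [shiftDiff, two_mul_completeHomSum_two_sub_shift (by rw [← map_sum, hμ, map_zero])]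
  simp only [← map_pow, ← map_sum, mul_sub, ← map_ofNat C 2, ← map_mul]
  congr 2
  field_simp

lemma totalDegree_shiftDiff_two [CharZero K] {μ : Fin n → K} (hμ0 : μ ≠ 0)
    (hμ : ∑ j, μ j = 0) : (shiftDiff μ 2).totalDegree = 1 := by
  obtain ⟨a, ha⟩ := Function.ne_iff.1 hμ0
  rw [Pi.zero_apply] at ha
  rw [shiftDiff_two hμ]
  refine le_antisymm ?_ ?_
  · refine (totalDegree_sub _ _).trans (max_le ?_ (by simp))
    refine totalDegree_finsetSum_le fun j _ => (totalDegree_mul _ _).trans ?_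
    simp
  · refine le_totalDegree (s := Finsupp.single a 1) ?_ |>.trans_eq' (by simp)
    simp [coeff_sum, coeff_X, coeff_C, Finsupp.single_left_inj one_ne_zero,
      eq_comm (a := (0 : Fin n →₀ ℕ)), ha]

lemma irreducible_shiftDiff_two [CharZero K] {μ : Fin n → K} (hμ0 : μ ≠ 0)
    (hμ : ∑ j, μ j = 0) : Irreducible (shiftDiff μ 2) := by
  have hdeg := totalDegree_shiftDiff_two hμ0 hμ
  obtain ⟨d, hd⟩ := ne_zero_iff.1 (show shiftDiff μ 2 ≠ 0 by rintro h; simp [h] at hdeg)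
  refine irreducible_of_totalDegree_eq_one hdeg fun r hr => isUnit_iff_ne_zero.2 ?_
  rintro rfl
  exact hd (zero_dvd_iff.1 (hr d))

lemma not_shiftDiff_two_dvd_shiftDiff_three [CharZero K] {μ : Fin n → K} (hμ0 : μ ≠ 0)
    (hμ : ∑ j, μ j = 0)
    (hμ' : ∀ (c : K) (a b : Fin n), a ≠ b → μ ≠ c • (Pi.single a 1 - Pi.single b 1)) :
    ¬ shiftDiff μ 2 ∣ shiftDiff μ 3 := by
  rintro ⟨q, hq⟩
  have hquadric (lam : Fin n → K) (hlam : ∑ j, μ j * lam j = (∑ j, μ j ^ 2) / 2) :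
      ∑ j, μ j * lam j ^ 2 = ∑ j, μ j ^ 2 * lam j + -(∑ j, μ j ^ 3) / 3 := by
    have h2 : eval lam (shiftDiff μ 2) = 0 := by simp [shiftDiff_two hμ, hlam]
    have h3 := six_mul_completeHomSum_three_sub_shift (x := lam) hμ
    rw [← eval_shiftDiff, hq, eval_mul, h2, zero_mul, mul_zero] at h3
    linear_combination -h3 / 6 - (∑ j, lam j) * hlam
  obtain ⟨c, a, b, hab, hμab⟩ := exists_eq_smul_single_sub_single hμ0 hμ
    fun a j haj => mul_mul_add_eq_zero_of_forall_sum_mul_eq hquadric haj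
  exact hμ' c a b hab hμab

end ShiftDiff

lemma irreducible_sum_C_mul_X {ι S : Type*} [Fintype ι] [CommRing S] [IsDomain S] {g : ι → S}
    (hg : ∀ r, (∀ i, r ∣ g i) → IsUnit r) :
    Irreducible (∑ i, C (g i) * X i : MvPolynomial ι S) := by
  have hne : (Finsupp.equivFunOnFinite.symm g).support.Nonempty := by
    refine Finsupp.support_nonempty_iff.2 fun h0 => not_isUnit_zero (hg 0 fun i => ?_)
    simpa using congrArg (· i) h0
  convert irreducible_sumSMulX _ hne hg using 1
  simp [sumSMulX, Finsupp.linearCombination_apply, Finsupp.sum_fintype, smul_eq_C_mul]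

lemma sumAlgEquiv_sum_X_mul_shiftDiff (n m : ℕ) (μ : Fin n → ℂ) :
    sumAlgEquiv ℂ (Fin m) (Fin n) (∑ i : Fin m,
        (X (Sum.inl i) : MvPolynomial (Fin m ⊕ Fin n) ℂ) *
          (aeval (fun j : Fin n => (X (Sum.inr j) : MvPolynomial (Fin m ⊕ Fin n) ℂ))
              (hpoly n ((i : ℕ) + 1)) -
            aeval (fun j : Fin n =>
                (X (Sum.inr j) : MvPolynomial (Fin m ⊕ Fin n) ℂ) - C (μ j))
              (hpoly n ((i : ℕ) + 1)))) =
      ∑ i : Fin m, C (shiftDiff μ (i + 1)) * X i := by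
  have hrename (p : ℕ) :
      aeval (fun j : Fin n => (X (Sum.inr j) : MvPolynomial (Fin m ⊕ Fin n) ℂ)) (hpoly n p) -
          aeval (fun j : Fin n => (X (Sum.inr j) : MvPolynomial (Fin m ⊕ Fin n) ℂ) - C (μ j))
            (hpoly n p) =
        rename Sum.inr (shiftDiff μ p) := by
    rw [aeval_hpoly, aeval_hpoly, shiftDiff, map_sub, map_completeHomSum, map_completeHomSum]
    simp
  simp only [hrename, map_sum, map_mul, sumAlgEquiv_X_inl]
  refine sum_congr rfl fun i _ => ?_
  rw [mul_comm]
  congr 1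
  exact AlgHom.congr_fun (sumAlgEquiv_comp_rename_inr ℂ (Fin m) (Fin n)) _

theorem stmt0_general (n m : ℕ) (hm : 3 ≤ m) (μ : Fin n → ℂ)
    (hμ : μ ≠ 0)
    (hμ' : ∀ (c : ℂ) (a b : Fin n), a ≠ b →
      μ ≠ c • (Pi.single a (1 : ℂ) - Pi.single b (1 : ℂ))) :
    Irreducible
      (∑ i : Fin m,
        (X (Sum.inl i) : MvPolynomial (Fin m ⊕ Fin n) ℂ) *
          (aeval (fun j : Fin n => (X (Sum.inr j) : MvPolynomial (Fin m ⊕ Fin n) ℂ))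
              (hpoly n ((i : ℕ) + 1)) -
            aeval (fun j : Fin n =>
                (X (Sum.inr j) : MvPolynomial (Fin m ⊕ Fin n) ℂ) - C (μ j))
              (hpoly n ((i : ℕ) + 1)))) := by
  rw [← MulEquiv.irreducible_iff (sumAlgEquiv ℂ (Fin m) (Fin n)),
    sumAlgEquiv_sum_X_mul_shiftDiff]
  refine irreducible_sum_C_mul_X fun b hb => ?_
  rcases eq_or_ne (∑ j, μ j) 0 with h0 | h0
  · exact (irreducible_shiftDiff_two hμ h0).isRelPrime_iff_not_dvd.2
        (not_shiftDiff_two_dvd_shiftDiff_three hμ h0 hμ') (hb ⟨1, by omega⟩)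
      (hb ⟨2, by omega⟩)
  · exact isUnit_of_dvd_unit (shiftDiff_one μ ▸ hb ⟨0, by omega⟩) ((Ne.isUnit h0).map C)

/-- For `n ≥ 1`, `m ≥ 3`, and `μ ∈ ℂ^n` nonzero and not of the form
`c (e_a - e_b)`, the polynomial `∑_{i=1}^m w_i (h_i(λ) - h_i(λ - μ))` is irreducible
in `ℂ[w_1, …, w_m, λ_1, …, λ_n]`. -/
theorem stmt0 (n m : ℕ) (hn : 1 ≤ n) (hm : 3 ≤ m) (μ : Fin n → ℂ)
    (hμ : μ ≠ 0)
    (hμ' : ∀ (c : ℂ) (a b : Fin n), a ≠ b →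
      μ ≠ c • (Pi.single a (1 : ℂ) - Pi.single b (1 : ℂ))) :
    Irreducible
      (∑ i : Fin m,
        (X (Sum.inl i) : MvPolynomial (Fin m ⊕ Fin n) ℂ) *
          (aeval (fun j : Fin n => (X (Sum.inr j) : MvPolynomial (Fin m ⊕ Fin n) ℂ))
              (hpoly n ((i : ℕ) + 1)) -
            aeval (fun j : Fin n =>
                (X (Sum.inr j) : MvPolynomial (Fin m ⊕ Fin n) ℂ) - C (μ j))
              (hpoly n ((i : ℕ) + 1)))) :=
  stmt0_general n m hm μ hμ hμ'
end

section
/- Let n ≥ 2, let 1 ≤ a < b ≤ n be indices, let c be an indeterminate (or any fixed complex scalar), and let i ≥ 0. Then the linear polynomial λ_a − λ_b − c divides the polynomial h_i(λ_1,…,λ_n) − h_i(λ_1,…,λ_a−c,…,λ_b+c,…,λ_n) (i.e., h_i evaluated after replacing λ_a by λ_a−c and λ_b by λ_b+c) in the polynomial ring ℂ[λ_1,…,λ_n,c]. -/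
open MvPolynomial

lemma dvd_aeval_sub {σ S : Type*} [CommRing S] [Algebra ℂ S]
    (δ : S) (v w : σ → S) (h : ∀ j, δ ∣ v j - w j) (p : MvPolynomial σ ℂ) :
    δ ∣ aeval v p - aeval w p := by
  induction p using MvPolynomial.induction_on with
  | C c => simp
  | add p q hp hq =>
    have := dvd_add hp hq
    simpa [map_add, sub_add_sub_comm] using this
  | mul_X p j hp =>
    have key : aeval v (p * X j) - aeval w (p * X j) =
        aeval v p * (v j - w j) + (aeval v p - aeval w p) * w j := by
      simp only [map_mul, aeval_X]; ring
    rw [key]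
    exact dvd_add (Dvd.dvd.mul_left (h j) _) (Dvd.dvd.mul_right hp _)

lemma hpoly_rename (n p : ℕ) (σ : Equiv.Perm (Fin n)) :
    rename σ (hpoly n p) = hpoly n p := by
  unfold hpoly
  rw [map_sum]
  refine Finset.sum_nbij' (fun d => d ∘ σ.symm) (fun d => d ∘ σ) ?_ ?_ ?_ ?_ ?_
  · intro d hd
    rw [Finset.Nat.mem_antidiagonalTuple] at hd ⊢
    rw [← hd]
    exact Fintype.sum_equiv σ.symm _ _ (fun i => rfl)
  · intro d hd
    rw [Finset.Nat.mem_antidiagonalTuple] at hd ⊢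
    rw [← hd]
    exact Fintype.sum_equiv σ _ _ (fun i => rfl)
  · intro d _; ext i; simp
  · intro d _; ext i; simp
  · intro d _
    rw [map_prod]
    simp only [map_pow, rename_X]
    exact Fintype.prod_equiv σ _ _ (fun i => by simp)

/-- In `ℂ[λ_1, …, λ_n, c]`, the linear polynomial `λ_a - λ_b - c` divides
`h_i(λ) - h_i(λ_1, …, λ_a - c, …, λ_b + c, …, λ_n)`. -/
theorem stmt1 (n : ℕ) (hn : 2 ≤ n) (a b : Fin n) (hab : a < b) (i : ℕ) :
    ((X (Sum.inl a) : MvPolynomial (Fin n ⊕ Unit) ℂ) - X (Sum.inl b) - X (Sum.inr ())) ∣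
      (aeval (fun j : Fin n => (X (Sum.inl j) : MvPolynomial (Fin n ⊕ Unit) ℂ))
          (hpoly n i) -
        aeval (fun j : Fin n =>
            if j = a then (X (Sum.inl a) : MvPolynomial (Fin n ⊕ Unit) ℂ) - X (Sum.inr ())
            else if j = b then X (Sum.inl b) + X (Sum.inr ())
            else X (Sum.inl j))
          (hpoly n i)) := by
  have hne : a ≠ b := ne_of_lt hab
  set v₁ : Fin n → MvPolynomial (Fin n ⊕ Unit) ℂ := fun j => X (Sum.inl j) with hv₁
  set v₂ : Fin n → MvPolynomial (Fin n ⊕ Unit) ℂ := fun j =>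
      if j = a then (X (Sum.inl a) : MvPolynomial (Fin n ⊕ Unit) ℂ) - X (Sum.inr ())
      else if j = b then X (Sum.inl b) + X (Sum.inr ())
      else X (Sum.inl j) with hv₂
  have hA : aeval v₁ (hpoly n i) =
      aeval (v₁ ∘ Equiv.swap a b) (hpoly n i) := by
    conv_lhs => rw [← hpoly_rename n i (Equiv.swap a b), aeval_rename]
  rw [hA]
  apply dvd_aeval_sub
  intro j
  by_cases hja : j = a
  · subst hja
    refine ⟨-1, ?_⟩
    simp only [Function.comp, Equiv.swap_apply_left, hv₂, if_pos rfl]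
    ring
  · by_cases hjb : j = b
    · subst hjb
      refine ⟨1, ?_⟩
      simp only [Function.comp, Equiv.swap_apply_right, hv₂, hv₁, if_neg hne, if_pos rfl, if_neg hja, if_true]
      ring
    · refine ⟨0, ?_⟩
      simp only [Function.comp, Equiv.swap_apply_of_ne_of_ne hja hjb, hv₂,
        if_neg hja, if_neg hjb]
      ring
end

section
/- Let n ≥ 2 and m ≥ 3 be integers, let 1 ≤ a < b ≤ n, and let k be a positive integer. Then there is a unique polynomial Q ∈ ℂ[w_1,…,w_m,λ_1,…,λ_n] satisfying (λ_a − λ_b − k)·Q = ∑_{i=1}^{m} w_i·(h_i(λ_1,…,λ_n) − h_i(λ_1,…,λ_a−k,…,λ_b+k,…,λ_n)), and this polynomial Q is irreducible in ℂ[w_1,…,w_m,λ_1,…,λ_n]. -/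
/-!
Write `h_p(s)` for the complete homogeneous symmetric polynomial of a multiset `s`. Splitting off
the monomials that contain `x` gives `h_{p+1}(x, s) - h_{p+1}(y, s) = (x - y) h_p(x, y, s)`.
Moving `λ_a` to `λ_a - k` and then `λ_b` to `λ_b + k` with this rule, and applying it once more to
the two resulting terms, shows that `h_{p+1}(λ) - h_{p+1}(λ')` is `(λ_a - λ_b - k) g_p` with
`g_0 = 0` and `g_p = k h_{p-1}(λ_a, λ_b + k, λ_a - k, λ_b, …)`. So `Q = ∑ w_i g_i` is the solution,
unique because `ℂ[w, λ]` is a domain. Over `ℂ[λ]`, `Q` is linear in the `w`'s, with coefficient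
`g_1 = k` at `w_2`; a factor of degree zero in the `w`'s therefore divides the unit `k`.
-/

open MvPolynomial

namespace Finset.Nat

lemma sum_antidiagonalTuple_succ {M : Type*} [AddCommMonoid M] {k n : ℕ}
    (F : (Fin (k + 1) → ℕ) → M) :
    ∑ d ∈ antidiagonalTuple (k + 1) n, F d =
      ∑ ni ∈ antidiagonal n, ∑ d ∈ antidiagonalTuple k ni.2, F (Fin.cons ni.1 d) := by
  have : (antidiagonalTuple (k + 1) n).val =
      (antidiagonal n).val.bind fun ni => (antidiagonalTuple k ni.2).val.map (Fin.cons ni.1) :=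
    (Multiset.coe_bind _ _).symm
  simp only [Finset.sum, this, Multiset.map_bind, Multiset.sum_bind, Multiset.map_map]
  rfl

lemma sum_antidiagonalTuple_prod_pow_succ {A : Type*} [CommSemiring A] {k : ℕ}
    (f : Fin (k + 1) → A) (p : ℕ) :
    ∑ d ∈ antidiagonalTuple (k + 1) (p + 1), ∏ i, f i ^ d i =
      ∑ d ∈ antidiagonalTuple k (p + 1), ∏ i, f i.succ ^ d i +
        f 0 * ∑ d ∈ antidiagonalTuple (k + 1) p, ∏ i, f i ^ d i := by
  simp only [sum_antidiagonalTuple_succ (n := p + 1), sum_antidiagonalTuple_succ (n := p),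
    sum_antidiagonal_succ, Fin.prod_univ_succ, Fin.cons_zero, Fin.cons_succ, pow_zero, one_mul,
    Finset.mul_sum, pow_succ]
  congr 1
  refine Finset.sum_congr rfl fun _ _ => Finset.sum_congr rfl fun _ _ => by ring

end Finset.Nat

namespace List

variable {A : Type*} [CommRing A]

def hsymm : List A → ℕ → A
  | _, 0 => 1
  | [], _ + 1 => 0
  | x :: l, p + 1 => hsymm l (p + 1) + x * hsymm (x :: l) p
  termination_by l p => (l.length, p)

@[simp] lemma hsymm_zero (l : List A) : l.hsymm 0 = 1 := by cases l <;> simp [hsymm]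

@[simp] lemma hsymm_nil_succ (p : ℕ) : ([] : List A).hsymm (p + 1) = 0 := by simp [hsymm]

lemma hsymm_cons_succ (x : A) (l : List A) (p : ℕ) :
    (x :: l).hsymm (p + 1) = l.hsymm (p + 1) + x * (x :: l).hsymm p := by
  rw [hsymm]

lemma hsymm_map {B F : Type*} [CommRing B] [FunLike F A B] [RingHomClass F A B] (f : F)
    (l : List A) (p : ℕ) : (l.map f).hsymm p = f (l.hsymm p) := by
  induction l generalizing p with
  | nil => cases p <;> simp
  | cons x l ihl =>
    induction p with
    | zero => simp
    | succ p ihp =>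
      rw [map_cons, hsymm_cons_succ, ← map_cons, ihl, ihp, hsymm_cons_succ (x := x), map_add,
        map_mul]

lemma hsymm_cons_sub_cons (x y : A) (l : List A) (p : ℕ) :
    (x :: l).hsymm (p + 1) - (y :: l).hsymm (p + 1) = (x - y) * (x :: y :: l).hsymm p := by
  induction p with
  | zero => simp [hsymm_cons_succ]
  | succ q ih =>
    rw [hsymm_cons_succ x l, hsymm_cons_succ y l, hsymm_cons_succ x (y :: l)]
    linear_combination x * ih

lemma hsymm_cons_cons_comm (x y : A) (l : List A) (p : ℕ) :
    (x :: y :: l).hsymm p = (y :: x :: l).hsymm p := by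
  induction p with
  | zero => simp
  | succ q ih =>
    rw [hsymm_cons_succ x (y :: l), hsymm_cons_succ y (x :: l)]
    linear_combination hsymm_cons_sub_cons y x l q + x * ih

lemma Perm.hsymm_eq {l l' : List A} (h : l.Perm l') (p : ℕ) : l.hsymm p = l'.hsymm p := by
  induction h generalizing p with
  | nil => rfl
  | cons x _ ih =>
    induction p with
    | zero => simp
    | succ q ihq => rw [hsymm_cons_succ, hsymm_cons_succ, ih, ihq]
  | swap x y l => exact hsymm_cons_cons_comm y x l p
  | trans _ _ ih₁ ih₂ => rw [ih₁, ih₂]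

lemma hsymm_ofFn {n : ℕ} (f : Fin n → A) (p : ℕ) :
    (ofFn f).hsymm p = ∑ d ∈ Finset.Nat.antidiagonalTuple n p, ∏ i, f i ^ d i := by
  induction n generalizing p with
  | zero => cases p <;> simp [Finset.Nat.antidiagonalTuple_zero_succ]
  | succ n ihn =>
    induction p with
    | zero => simp [Finset.Nat.antidiagonalTuple_zero_right]
    | succ p ihp =>
      rw [ofFn_succ, hsymm_cons_succ, ihn, ← ofFn_succ, ihp,
        Finset.Nat.sum_antidiagonalTuple_prod_pow_succ]

end List

namespace Multiset

variable {A : Type*} [CommRing A]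

def hsymm (s : Multiset A) (p : ℕ) : A :=
  Quot.liftOn s (List.hsymm · p) fun _ _ h => h.hsymm_eq p

@[simp] lemma hsymm_coe (l : List A) (p : ℕ) : (l : Multiset A).hsymm p = l.hsymm p := rfl

@[simp] lemma hsymm_zero (s : Multiset A) : s.hsymm 0 = 1 :=
  Quot.inductionOn s fun l => l.hsymm_zero

lemma hsymm_cons_sub_cons (x y : A) (s : Multiset A) (p : ℕ) :
    (x ::ₘ s).hsymm (p + 1) - (y ::ₘ s).hsymm (p + 1) = (x - y) * (x ::ₘ y ::ₘ s).hsymm p :=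
  Quot.inductionOn s fun l => l.hsymm_cons_sub_cons x y p

lemma hsymm_map {B F : Type*} [CommRing B] [FunLike F A B] [RingHomClass F A B] (f : F)
    (s : Multiset A) (p : ℕ) : (s.map f).hsymm p = f (s.hsymm p) :=
  Quot.inductionOn s fun l => l.hsymm_map f p

def hsymmShiftQuot (x y k : A) (s : Multiset A) : ℕ → A
  | 0 => 0
  | p + 1 => k * (x ::ₘ (y + k) ::ₘ (x - k) ::ₘ y ::ₘ s).hsymm p

lemma hsymm_sub_hsymm_shift (x y k : A) (s : Multiset A) (p : ℕ) :
    (x ::ₘ y ::ₘ s).hsymm (p + 1) - ((x - k) ::ₘ (y + k) ::ₘ s).hsymm (p + 1) =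
      (x - y - k) * hsymmShiftQuot x y k s p := by
  -- telescope through `(x - k, y, s)`; the two resulting `k`-multiples differ by one more such step
  have hx := hsymm_cons_sub_cons x (x - k) (y ::ₘ s) p
  have hy := hsymm_cons_sub_cons y (y + k) ((x - k) ::ₘ s) p
  rw [cons_swap y (x - k)] at hy
  rw [cons_swap (x - k) (y + k)]
  cases p with
  | zero =>
    simp only [hsymm_zero] at hx hy
    simp only [hsymmShiftQuot]
    linear_combination hx + hy
  | succ p =>
    have hxy := hsymm_cons_sub_cons x (y + k) ((x - k) ::ₘ y ::ₘ s) p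
    have hperm : y ::ₘ (y + k) ::ₘ (x - k) ::ₘ s = (y + k) ::ₘ (x - k) ::ₘ y ::ₘ s := by
      simp only [← singleton_add]; abel
    rw [hperm] at hy
    simp only [hsymmShiftQuot]
    linear_combination hx + hy + k * hxy

lemma hsymmShiftQuot_map {B F : Type*} [CommRing B] [FunLike F A B] [RingHomClass F A B]
    (f : F) (x y k : A) (s : Multiset A) (p : ℕ) :
    hsymmShiftQuot (f x) (f y) (f k) (s.map f) p = f (hsymmShiftQuot x y k s p) := by
  cases p <;> simp [hsymmShiftQuot, ← hsymm_map]

lemma map_univ_eq_cons_cons {ι α : Type*} [Fintype ι] [DecidableEq ι] {a b : ι} (hab : a ≠ b)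
    (f : ι → α) :
    Finset.univ.val.map f = f a ::ₘ f b ::ₘ ((Finset.univ.erase a).erase b).val.map f := by
  rw [← map_cons, ← map_cons, Finset.erase_val, Finset.erase_val,
    cons_erase (mem_erase_of_ne hab.symm |>.mpr (Finset.mem_univ b)),
    cons_erase (Finset.mem_univ a)]

end Multiset

lemma aeval_hpoly_s2 {A : Type*} [CommRing A] [Algebra ℂ A] {n : ℕ} (f : Fin n → A) (p : ℕ) :
    aeval f (hpoly n p) = (Finset.univ.val.map f).hsymm p := by
  simp [hpoly, List.hsymm_ofFn]

lemma aeval_hpoly_sub_aeval_hpoly_shift {A : Type*} [CommRing A] [Algebra ℂ A] {n : ℕ}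
    {a b : Fin n} (hab : a ≠ b) (f : Fin n → A) (k : A) (p : ℕ) :
    aeval f (hpoly n (p + 1)) -
        aeval (fun j => if j = a then f a - k else if j = b then f b + k else f j)
          (hpoly n (p + 1)) =
      (f a - f b - k) *
        Multiset.hsymmShiftQuot (f a) (f b) k (((Finset.univ.erase a).erase b).val.map f) p := by
  have hrest : ((Finset.univ.erase a).erase b).val.map
      (fun j => if j = a then f a - k else if j = b then f b + k else f j) =
      ((Finset.univ.erase a).erase b).val.map f :=
    Multiset.map_congr rfl fun j hj => by
      rw [Finset.mem_val, Finset.mem_erase, Finset.mem_erase] at hj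
      simp [hj.1, hj.2.1]
  rw [aeval_hpoly_s2, aeval_hpoly_s2, Multiset.map_univ_eq_cons_cons hab,
    Multiset.map_univ_eq_cons_cons hab, hrest, if_pos rfl, if_neg hab.symm, if_pos rfl]
  exact Multiset.hsymm_sub_hsymm_shift _ _ _ _ _

namespace MvPolynomial

variable {σ R : Type*} [CommRing R] [IsDomain R]

lemma irreducible_of_totalDegree_le_one {p : MvPolynomial σ R} (hp : p.totalDegree ≤ 1)
    {μ : σ →₀ ℕ} (hμ : μ ≠ 0) (hunit : IsUnit (p.coeff μ)) : Irreducible p := by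
  classical
  have hp0 : p ≠ 0 := by rintro rfl; simp at hunit
  refine ⟨fun hu => ?_, fun f g hfg => ?_⟩
  · obtain ⟨q, hq⟩ := hu.exists_right_inv
    have hdeg := totalDegree_mul_of_isDomain hp0 (right_ne_zero_of_mul_eq_one hq)
    rw [hq, totalDegree_one] at hdeg
    rw [(totalDegree_eq_zero_iff_eq_C (p := p)).mp (by omega), coeff_C, if_neg hμ.symm] at hunit
    exact not_isUnit_zero hunit
  · subst hfg
    have hdeg := totalDegree_mul_of_isDomain (left_ne_zero_of_mul hp0) (right_ne_zero_of_mul hp0)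
    obtain h | h : f.totalDegree = 0 ∨ g.totalDegree = 0 := by omega
    · left
      rw [totalDegree_eq_zero_iff_eq_C.mp h] at hunit ⊢
      rw [coeff_C_mul] at hunit
      exact (isUnit_of_mul_isUnit_left hunit).map C
    · right
      rw [totalDegree_eq_zero_iff_eq_C.mp h] at hunit ⊢
      rw [mul_comm, coeff_C_mul] at hunit
      exact (isUnit_of_mul_isUnit_left hunit).map C

lemma irreducible_sum_X_mul_C [Fintype σ] (c : σ → R) {i : σ} (hi : IsUnit (c i)) :
    Irreducible (∑ j, X j * C (c j)) := by
  classical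
  refine irreducible_of_totalDegree_le_one ?_ (μ := Finsupp.single i 1) (by simp) ?_
  · refine (totalDegree_finsetSum _ _).trans (Finset.sup_le fun j _ => ?_)
    exact (totalDegree_mul _ _).trans (by simp)
  · simpa [coeff_sum, coeff_X_mul'] using hi

lemma irreducible_sum_X_inl_mul_rename_inr {τ : Type*} [Fintype σ]
    (c : σ → MvPolynomial τ R) {i : σ} (hi : IsUnit (c i)) :
    Irreducible (∑ j, X (Sum.inl j) * rename Sum.inr (c j) : MvPolynomial (σ ⊕ τ) R) := by
  rw [← MulEquiv.irreducible_iff (sumAlgEquiv R σ τ)]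
  convert irreducible_sum_X_mul_C c hi
  simp only [map_sum, map_mul, sumAlgEquiv_X_inl]
  exact Finset.sum_congr rfl fun j _ =>
    congrArg _ (AlgHom.congr_fun (sumAlgEquiv_comp_rename_inr R σ τ) (c j))

end MvPolynomial

theorem stmt2_general (n m : ℕ) (hm : 3 ≤ m) (a b : Fin n) (hab : a < b)
    (k : ℕ) (hk : 1 ≤ k) :
    (∃! Q : MvPolynomial (Fin m ⊕ Fin n) ℂ,
        ((X (Sum.inr a) : MvPolynomial (Fin m ⊕ Fin n) ℂ) - X (Sum.inr b) - C (k : ℂ)) * Q =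
          ∑ i : Fin m,
            (X (Sum.inl i) : MvPolynomial (Fin m ⊕ Fin n) ℂ) *
              (aeval (fun j : Fin n =>
                  (X (Sum.inr j) : MvPolynomial (Fin m ⊕ Fin n) ℂ))
                  (hpoly n ((i : ℕ) + 1)) -
                aeval (fun j : Fin n =>
                    if j = a then
                      (X (Sum.inr a) : MvPolynomial (Fin m ⊕ Fin n) ℂ) - C (k : ℂ)
                    else if j = b then X (Sum.inr b) + C (k : ℂ)
                    else X (Sum.inr j))
                  (hpoly n ((i : ℕ) + 1)))) ∧
    (∀ Q : MvPolynomial (Fin m ⊕ Fin n) ℂ,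
        ((X (Sum.inr a) : MvPolynomial (Fin m ⊕ Fin n) ℂ) - X (Sum.inr b) - C (k : ℂ)) * Q =
          (∑ i : Fin m,
            (X (Sum.inl i) : MvPolynomial (Fin m ⊕ Fin n) ℂ) *
              (aeval (fun j : Fin n =>
                  (X (Sum.inr j) : MvPolynomial (Fin m ⊕ Fin n) ℂ))
                  (hpoly n ((i : ℕ) + 1)) -
                aeval (fun j : Fin n =>
                    if j = a then
                      (X (Sum.inr a) : MvPolynomial (Fin m ⊕ Fin n) ℂ) - C (k : ℂ)
                    else if j = b then X (Sum.inr b) + C (k : ℂ)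
                    else X (Sum.inr j))
                  (hpoly n ((i : ℕ) + 1)))) →
        Irreducible Q) := by
  set D : MvPolynomial (Fin m ⊕ Fin n) ℂ := X (Sum.inr a) - X (Sum.inr b) - C (k : ℂ)
  set G : ℕ → MvPolynomial (Fin n) ℂ := Multiset.hsymmShiftQuot (X a) (X b) (C (k : ℂ))
    (((Finset.univ.erase a).erase b).val.map X)
  set Q₀ := ∑ i : Fin m, X (Sum.inl i) * rename Sum.inr (G i)
  have hG (p : ℕ) : Multiset.hsymmShiftQuot
      (X (Sum.inr a) : MvPolynomial (Fin m ⊕ Fin n) ℂ) (X (Sum.inr b)) (C (k : ℂ))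
      (((Finset.univ.erase a).erase b).val.map fun j => X (Sum.inr j)) p =
      rename Sum.inr (G p) := by
    simp [G, ← Multiset.hsymmShiftQuot_map, Multiset.map_map]
  have hD : D ≠ 0 := fun h => by
    have := congrArg (eval 0) h
    simp [D] at this
    omega
  have hirr : Irreducible Q₀ := by
    refine irreducible_sum_X_inl_mul_rename_inr (fun i : Fin m => G i) (i := ⟨1, by omega⟩) ?_
    show IsUnit (G 1)
    simp only [G, Multiset.hsymmShiftQuot, Multiset.hsymm_zero, mul_one]
    exact (Ne.isUnit (Nat.cast_ne_zero.mpr (by omega))).map C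
  simp only [aeval_hpoly_sub_aeval_hpoly_shift hab.ne, hG,
    mul_left_comm (X (Sum.inl _) : MvPolynomial (Fin m ⊕ Fin n) ℂ), ← Finset.mul_sum]
  exact ⟨⟨Q₀, rfl, fun Q hQ => mul_left_cancel₀ hD hQ⟩,
    fun Q hQ => mul_left_cancel₀ hD hQ ▸ hirr⟩

/-- For `n ≥ 2`, `m ≥ 3`, indices `a < b` and a positive integer `k`,
there is a unique polynomial `Q` in `ℂ[w_1, …, w_m, λ_1, …, λ_n]` with
`(λ_a - λ_b - k) Q = ∑_{i=1}^m w_i (h_i(λ) - h_i(λ_1,…,λ_a-k,…,λ_b+k,…,λ_n))`,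
and any such `Q` is irreducible. -/
theorem stmt2 (n m : ℕ) (hn : 2 ≤ n) (hm : 3 ≤ m) (a b : Fin n) (hab : a < b)
    (k : ℕ) (hk : 1 ≤ k) :
    (∃! Q : MvPolynomial (Fin m ⊕ Fin n) ℂ,
        ((X (Sum.inr a) : MvPolynomial (Fin m ⊕ Fin n) ℂ) - X (Sum.inr b) - C (k : ℂ)) * Q =
          ∑ i : Fin m,
            (X (Sum.inl i) : MvPolynomial (Fin m ⊕ Fin n) ℂ) *
              (aeval (fun j : Fin n =>
                  (X (Sum.inr j) : MvPolynomial (Fin m ⊕ Fin n) ℂ))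
                  (hpoly n ((i : ℕ) + 1)) -
                aeval (fun j : Fin n =>
                    if j = a then
                      (X (Sum.inr a) : MvPolynomial (Fin m ⊕ Fin n) ℂ) - C (k : ℂ)
                    else if j = b then X (Sum.inr b) + C (k : ℂ)
                    else X (Sum.inr j))
                  (hpoly n ((i : ℕ) + 1)))) ∧
    (∀ Q : MvPolynomial (Fin m ⊕ Fin n) ℂ,
        ((X (Sum.inr a) : MvPolynomial (Fin m ⊕ Fin n) ℂ) - X (Sum.inr b) - C (k : ℂ)) * Q =
          (∑ i : Fin m,
            (X (Sum.inl i) : MvPolynomial (Fin m ⊕ Fin n) ℂ) *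
              (aeval (fun j : Fin n =>
                  (X (Sum.inr j) : MvPolynomial (Fin m ⊕ Fin n) ℂ))
                  (hpoly n ((i : ℕ) + 1)) -
                aeval (fun j : Fin n =>
                    if j = a then
                      (X (Sum.inr a) : MvPolynomial (Fin m ⊕ Fin n) ℂ) - C (k : ℂ)
                    else if j = b then X (Sum.inr b) + C (k : ℂ)
                    else X (Sum.inr j))
                  (hpoly n ((i : ℕ) + 1)))) →
        Irreducible Q) :=
  stmt2_general n m hm a b hab k hk
end

section
/- Let n ≥ 1 and let x_1,…,x_n ∈ ℂ be pairwise distinct. Then for every z ∈ ℂ, the series ∑_{p=0}^{∞} h_p(x_1,…,x_n) · z^{p+n−1}/(p+n−1)! converges (HasSum) with sum equal to ∑_{j=1}^{n} e^{x_j z} / ∏_{k≠j}(x_j − x_k). -/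
/-!
Write `[x] f = ∑ⱼ f(xⱼ) / ∏_{k ≠ j} (xⱼ - xₖ)` for the divided difference of `f` at the
nodes `x`. Lagrange interpolation gives `[x] tᵐ = 0` for `m < n - 1` and `[x] tⁿ⁻¹ = 1`.
The recursion `[x₀, …, xₙ] (t f) = x₀ [x₀, …, xₙ] f + [x₁, …, xₙ] f` is also satisfied by
`h_{p+1}`, whence `[x] t^{p+n-1} = h_p(x)`. Expanding `e^{tz}` as a power series in `t` and
applying the linear functional `[x]` term by term yields the theorem.
-/

open Finset Polynomial

variable {ι : Type*} [DecidableEq ι]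

section CompleteHomogeneous

variable {R : Type*} [CommSemiring R]

def completeHomogeneous (s : Finset ι) (x : ι → R) (p : ℕ) : R :=
  ∑ d ∈ s.piAntidiag p, ∏ i ∈ s, x i ^ d i

theorem completeHomogeneous_zero (s : Finset ι) (x : ι → R) :
    completeHomogeneous s x 0 = 1 := by
  simp [completeHomogeneous]

theorem completeHomogeneous_empty_succ (x : ι → R) (p : ℕ) :
    completeHomogeneous ∅ x (p + 1) = 0 := by
  simp [completeHomogeneous]

theorem completeHomogeneous_univ_fin {n : ℕ} (x : Fin n → R) (p : ℕ) :
    completeHomogeneous univ x p = ∑ d ∈ Nat.antidiagonalTuple n p, ∏ i, x i ^ d i := by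
  rw [completeHomogeneous, piAntidiag_univ_fin_eq_antidiagonalTuple]

theorem completeHomogeneous_cons {i : ι} {s : Finset ι} (hi : i ∉ s) (x : ι → R) (q : ℕ) :
    completeHomogeneous (s.cons i hi) x q =
      ∑ ab ∈ antidiagonal q, x i ^ ab.1 * completeHomogeneous s x ab.2 := by
  rw [completeHomogeneous, piAntidiag_cons, sum_disjiUnion]
  refine sum_congr rfl fun ab _ => ?_
  rw [sum_map, completeHomogeneous, mul_sum]
  refine sum_congr rfl fun g hg => ?_
  have hgi : g i = 0 := by_contra fun h => hi ((mem_piAntidiag.1 hg).2 i h)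
  rw [prod_cons]
  simp only [addRightEmbedding_apply, Pi.add_apply, hgi, zero_add]
  congr 1
  refine prod_congr rfl fun j hj => ?_
  rw [if_neg (ne_of_mem_of_not_mem hj hi), add_zero]

theorem completeHomogeneous_cons_succ {i : ι} {s : Finset ι} (hi : i ∉ s) (x : ι → R)
    (q : ℕ) :
    completeHomogeneous (s.cons i hi) x (q + 1) =
      x i * completeHomogeneous (s.cons i hi) x q + completeHomogeneous s x (q + 1) := by
  rw [completeHomogeneous_cons, completeHomogeneous_cons, Nat.sum_antidiagonal_succ, mul_sum,
    pow_zero, one_mul, add_comm]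
  simp only [pow_succ', mul_assoc]

end CompleteHomogeneous

section DividedDifference

variable {K : Type*} [Field K]

def dividedDifference (s : Finset ι) (x : ι → K) (f : K → K) : K :=
  ∑ i ∈ s, f (x i) / ∏ j ∈ s.erase i, (x i - x j)

theorem dividedDifference_pow_of_lt {s : Finset ι} {x : ι → K} (hx : Set.InjOn x s) {m : ℕ}
    (hm : m < #s) : dividedDifference s x (· ^ m) = if #s - 1 = m then 1 else 0 := by
  have hdeg : (X ^ m : K[X]).degree < #s := by rw [degree_X_pow]; exact_mod_cast hm
  simpa [dividedDifference, coeff_X_pow] using (Lagrange.coeff_eq_sum hx hdeg).symm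

theorem dividedDifference_cons_id_mul {i : ι} {s : Finset ι} (hi : i ∉ s) {x : ι → K}
    (hx : Set.InjOn x (s.cons i hi)) (f : K → K) :
    dividedDifference (s.cons i hi) x (fun t => t * f t) =
      x i * dividedDifference (s.cons i hi) x f + dividedDifference s x f := by
  have hsub : dividedDifference (s.cons i hi) x (fun t => (t - x i) * f t) =
      dividedDifference s x f := by
    rw [dividedDifference, sum_cons, sub_self, zero_mul, zero_div, zero_add]
    refine sum_congr rfl fun j hj => ?_
    have hij : i ≠ j := (ne_of_mem_of_not_mem hj hi).symm
    have hne : x j - x i ≠ 0 :=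
      sub_ne_zero.2 fun h => hij (hx (mem_cons_self i s) (mem_cons_of_mem hj) h.symm)
    rw [erase_cons_of_ne hi hij, prod_cons, mul_div_mul_left _ _ hne]
  rw [← hsub, dividedDifference, dividedDifference, dividedDifference, mul_sum,
    ← sum_add_distrib]
  refine sum_congr rfl fun j _ => ?_
  ring

theorem dividedDifference_cons_pow_succ {i : ι} {s : Finset ι} (hi : i ∉ s) {x : ι → K}
    (hx : Set.InjOn x (s.cons i hi)) (m : ℕ) :
    dividedDifference (s.cons i hi) x (· ^ (m + 1)) =
      x i * dividedDifference (s.cons i hi) x (· ^ m) + dividedDifference s x (· ^ m) := by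
  simpa only [pow_succ'] using dividedDifference_cons_id_mul hi hx (· ^ m)

theorem dividedDifference_pow_add_card {s : Finset ι} {x : ι → K} (hx : Set.InjOn x s)
    (p : ℕ) : dividedDifference s x (· ^ (p + #s)) = completeHomogeneous s x (p + 1) := by
  induction s using cons_induction generalizing p with
  | empty => simp [dividedDifference, completeHomogeneous_empty_succ]
  | cons i s hi ih =>
    have hxs := hx.mono (subset_cons hi)
    induction p with
    | zero =>
      rw [card_cons, completeHomogeneous_cons_succ, ← ih hxs 0, completeHomogeneous_zero,
        zero_add, dividedDifference_cons_pow_succ hi hx,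
        dividedDifference_pow_of_lt hx (by rw [card_cons]; omega), card_cons, Nat.add_sub_cancel,
        if_pos rfl, zero_add]
    | succ p ihp =>
      rw [card_cons, completeHomogeneous_cons_succ, ← ihp, ← ih hxs (p + 1), card_cons,
        show p + 1 + (#s + 1) = (p + #s + 1) + 1 by omega, dividedDifference_cons_pow_succ hi hx]
      ring_nf

theorem dividedDifference_pow_add_card_sub_one {s : Finset ι} {x : ι → K} (hx : Set.InjOn x s)
    (hs : s.Nonempty) (p : ℕ) :
    dividedDifference s x (· ^ (p + (#s - 1))) = completeHomogeneous s x p := by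
  cases p with
  | zero =>
    rw [zero_add, dividedDifference_pow_of_lt hx (by simp [hs.card_pos]), if_pos rfl,
      completeHomogeneous_zero]
  | succ p =>
    rw [← dividedDifference_pow_add_card hx, show p + 1 + (#s - 1) = p + #s by
      have := hs.card_pos; omega]

end DividedDifference

theorem hasSum_dividedDifference_exp (s : Finset ι) (x : ι → ℂ) (z : ℂ) :
    HasSum (fun m : ℕ => dividedDifference s x (· ^ m) * z ^ m / m.factorial)
      (dividedDifference s x fun t => Complex.exp (t * z)) := by
  have hexp (i : ι) :
      HasSum (fun m : ℕ => (x i * z) ^ m / m.factorial) (Complex.exp (x i * z)) := by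
    simpa [Complex.exp_eq_exp_ℂ] using NormedSpace.expSeries_div_hasSum_exp (x i * z)
  refine (hasSum_sum fun i _ => (hexp i).div_const (∏ j ∈ s.erase i, (x i - x j))).congr_fun
    fun m => ?_
  rw [dividedDifference, sum_mul, sum_div]
  refine sum_congr rfl fun i _ => ?_
  ring

/-- For pairwise distinct `x_1, …, x_n ∈ ℂ` and any `z ∈ ℂ`, the series
`∑_{p ≥ 0} h_p(x) z^{p+n-1}/(p+n-1)!` has sum `∑_j e^{x_j z} / ∏_{k ≠ j}(x_j - x_k)`. -/
theorem stmt7 (n : ℕ) (hn : 1 ≤ n) (x : Fin n → ℂ) (hx : Function.Injective x) (z : ℂ) :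
    HasSum
      (fun p : ℕ =>
        (∑ d ∈ Finset.Nat.antidiagonalTuple n p, ∏ i, x i ^ d i) *
          z ^ (p + n - 1) / (Nat.factorial (p + n - 1) : ℂ))
      (∑ j : Fin n, Complex.exp (x j * z) / ∏ k ∈ Finset.univ.erase j, (x j - x k)) := by
  obtain ⟨k, rfl⟩ := Nat.exists_eq_add_of_le' hn
  have hcard : #(univ : Finset (Fin (k + 1))) = k + 1 := card_fin _
  have hlow : ∑ m ∈ range k, dividedDifference univ x (· ^ m) * z ^ m / m.factorial = 0 :=
    sum_eq_zero fun m hm => by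
      have hmk : m < k := mem_range.1 hm
      rw [dividedDifference_pow_of_lt hx.injOn (by omega), hcard, if_neg (by omega), zero_mul,
        zero_div]
  have hshift := (hasSum_nat_add_iff' k).2 (hasSum_dividedDifference_exp univ x z)
  rw [hlow, sub_zero] at hshift
  refine hshift.congr_fun fun p => ?_
  rw [← completeHomogeneous_univ_fin, ← add_assoc, Nat.add_sub_cancel,
    ← dividedDifference_pow_add_card_sub_one hx.injOn univ_nonempty, hcard, Nat.add_sub_cancel]
end

section
/- Let n ≥ 1. Define the ℂ-linear operator Δ on the polynomial ring ℂ[z] by (Δg)(z) = g(z + 1/2) − g(z − 1/2). Then for every polynomial f ∈ ℂ[z] there exists a unique polynomial w ∈ ℂ[z] such that Δ^{n−1}(z^{n−1}·w(z)) = f(z); in other words, the ℂ-linear map w ↦ Δ^{n−1}(z^{n−1}·w) is a bijection of ℂ[z] onto itself. -/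
open Polynomial

/-- The difference operator `(Δ g)(z) = g(z + 1/2) - g(z - 1/2)` on `ℂ[z]`. -/
noncomputable def Δ : Polynomial ℂ → Polynomial ℂ :=
  fun g => g.comp (X + C (1 / 2 : ℂ)) - g.comp (X - C (1 / 2 : ℂ))

lemma delta_eq (g : Polynomial ℂ) :
    Δ g = taylor (1/2 : ℂ) g - taylor (-(1/2) : ℂ) g := by
  simp only [Δ, taylor_apply, map_neg, sub_eq_add_neg]

lemma delta_coeff (g : Polynomial ℂ) (j : ℕ) :
    (Δ g).coeff j = (hasseDeriv j g).eval (1/2 : ℂ) - (hasseDeriv j g).eval (-(1/2) : ℂ) := by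
  rw [delta_eq, coeff_sub, taylor_coeff, taylor_coeff]

lemma delta_sub (p q : Polynomial ℂ) : Δ (p - q) = Δ p - Δ q := by
  simp only [Δ, sub_comp]; ring

lemma delta_add (p q : Polynomial ℂ) : Δ (p + q) = Δ p + Δ q := by
  simp only [Δ, add_comp]; ring

lemma delta_zero : Δ (0 : Polynomial ℂ) = 0 := by
  simp [Δ]

lemma delta_iter_sub (m : ℕ) (p q : Polynomial ℂ) :
    Δ^[m] (p - q) = Δ^[m] p - Δ^[m] q := by
  induction m generalizing p q with
  | zero => simp
  | succ m ih => simp [Function.iterate_succ_apply, delta_sub, ih]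

lemma delta_iter_add (m : ℕ) (p q : Polynomial ℂ) :
    Δ^[m] (p + q) = Δ^[m] p + Δ^[m] q := by
  induction m generalizing p q with
  | zero => simp
  | succ m ih => simp [Function.iterate_succ_apply, delta_add, ih]

lemma delta_iter_zero (m : ℕ) : Δ^[m] (0 : Polynomial ℂ) = 0 := by
  induction m with
  | zero => simp
  | succ m ih => simp [Function.iterate_succ_apply, delta_zero, ih]

/-- Key single-step lemma: `Δ` lowers the degree by one and multiplies the
leading coefficient by the degree. -/
lemma delta_step (g : Polynomial ℂ) (k : ℕ) (hg : g.natDegree = k + 1) :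
    (Δ g).natDegree = k ∧ (Δ g).coeff k = (k + 1 : ℂ) * g.coeff (k + 1) := by
  have hg0 : g ≠ 0 := by
    intro h; rw [h] at hg; simp at hg
  -- coefficient at index `j ≥ k+1` vanishes
  have hvanish : ∀ j, k < j → (Δ g).coeff j = 0 := by
    intro j hj
    have hdle : (hasseDeriv j g).natDegree < 1 := by
      have := natDegree_hasseDeriv_le g j
      omega
    have heval : ∀ x : ℂ, (hasseDeriv j g).eval x = (hasseDeriv j g).coeff 0 := by
      intro x
      rw [eval_eq_sum_range' hdle]
      simp
    rw [delta_coeff, heval, heval, sub_self]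
  have hcoeff : (Δ g).coeff k = (k + 1 : ℂ) * g.coeff (k + 1) := by
    have hdle : (hasseDeriv k g).natDegree < 2 := by
      have := natDegree_hasseDeriv_le g k
      omega
    have heval : ∀ x : ℂ, (hasseDeriv k g).eval x =
        (hasseDeriv k g).coeff 0 + (hasseDeriv k g).coeff 1 * x := by
      intro x
      rw [eval_eq_sum_range' hdle]
      simp [Finset.sum_range_succ]
    have hc1 : (hasseDeriv k g).coeff 1 = (k + 1 : ℂ) * g.coeff (k + 1) := by
      rw [hasseDeriv_coeff]
      have : (1 + k).choose k = k + 1 := by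
        rw [add_comm 1 k, Nat.choose_succ_self_right]
      rw [this, add_comm 1 k]
      push_cast
      ring
    rw [delta_coeff, heval, heval, hc1]
    ring
  refine ⟨?_, hcoeff⟩
  have hle : (Δ g).natDegree ≤ k := natDegree_le_iff_coeff_eq_zero.2 hvanish
  have hck : (Δ g).coeff k ≠ 0 := by
    rw [hcoeff]
    have h1 : g.coeff (k + 1) ≠ 0 := by
      rw [← hg]
      exact leadingCoeff_ne_zero.2 hg0
    have h2 : (k + 1 : ℂ) ≠ 0 := by
      exact_mod_cast Nat.succ_ne_zero k
    exact mul_ne_zero h2 h1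
  exact le_antisymm hle (le_natDegree_of_ne_zero hck)

/-- The constant `∏_{i=0}^{m-1} (d + i + 1)` as a complex number. -/
noncomputable def dconst (m d : ℕ) : ℂ := ∏ i ∈ Finset.range m, ((d + i + 1 : ℕ) : ℂ)

lemma dconst_ne_zero (m d : ℕ) : dconst m d ≠ 0 := by
  unfold dconst
  refine Finset.prod_ne_zero_iff.2 fun i _ => ?_
  exact Nat.cast_ne_zero.2 (by omega)

lemma dconst_succ (m d : ℕ) : dconst (m + 1) d = ((d : ℂ) + 1) * dconst m (d + 1) := by
  unfold dconst
  rw [Finset.prod_range_succ']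
  have h : ∀ i ∈ Finset.range m, ((d + (i + 1) + 1 : ℕ) : ℂ) = (((d + 1) + i + 1 : ℕ) : ℂ) := by
    intro i _; congr 1; omega
  rw [Finset.prod_congr rfl h]
  push_cast
  ring

/-- Key lemma: the map `w ↦ Δ^[m] (X^m * w)` preserves degree and multiplies
the leading coefficient by the nonzero constant `dconst m d`. -/
lemma key (m : ℕ) : ∀ w : Polynomial ℂ, w ≠ 0 →
    (Δ^[m] (X ^ m * w)).natDegree = w.natDegree ∧
    (Δ^[m] (X ^ m * w)).leadingCoeff = dconst m w.natDegree * w.leadingCoeff := by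
  induction m with
  | zero =>
    intro w hw
    simp [dconst]
  | succ m ih =>
    intro w hw
    have hXw : (X : Polynomial ℂ) * w ≠ 0 := mul_ne_zero X_ne_zero hw
    have hrw : (X : Polynomial ℂ) ^ (m + 1) * w = X ^ m * (X * w) := by ring
    have hdeg : ((X : Polynomial ℂ) * w).natDegree = w.natDegree + 1 := by
      rw [natDegree_mul X_ne_zero hw, natDegree_X]
      omega
    have hlc : ((X : Polynomial ℂ) * w).leadingCoeff = w.leadingCoeff := by
      rw [leadingCoeff_mul, leadingCoeff_X, one_mul]
    obtain ⟨h1, h2⟩ := ih (X * w) hXw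
    rw [hdeg] at h1
    rw [hdeg, hlc] at h2
    set p := Δ^[m] (X ^ m * (X * w)) with hp
    obtain ⟨hs1, hs2⟩ := delta_step p w.natDegree h1
    have hiter : Δ^[m + 1] (X ^ (m + 1) * w) = Δ p := by
      rw [hrw, hp, Function.iterate_succ_apply']
    constructor
    · rw [hiter]; exact hs1
    · rw [hiter, leadingCoeff, hs1, hs2, dconst_succ]
      have : p.coeff (w.natDegree + 1) = p.leadingCoeff := by
        rw [leadingCoeff, h1]
      rw [this, h2]
      ring

lemma key_ne_zero (m : ℕ) (w : Polynomial ℂ) (hw : w ≠ 0) :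
    Δ^[m] (X ^ m * w) ≠ 0 := by
  obtain ⟨_, h2⟩ := key m w hw
  intro h
  rw [h] at h2
  simp only [leadingCoeff_zero] at h2
  exact mul_ne_zero (dconst_ne_zero m w.natDegree) (leadingCoeff_ne_zero.2 hw) h2.symm

/-- Existence, by strong induction on the degree. -/
lemma key_surj (m : ℕ) : ∀ d : ℕ, ∀ f : Polynomial ℂ, f.natDegree ≤ d →
    ∃ w : Polynomial ℂ, Δ^[m] (X ^ m * w) = f := by
  intro d
  induction d using Nat.strong_induction_on with
  | _ d ih =>
    intro f hf
    by_cases hf0 : f = 0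
    · exact ⟨0, by simp [hf0, delta_iter_zero]⟩
    · set d' := f.natDegree with hd'
      set w1 : Polynomial ℂ := C (f.leadingCoeff / dconst m d') * X ^ d' with hw1
      have hlcf : f.leadingCoeff ≠ 0 := leadingCoeff_ne_zero.2 hf0
      have hcne : f.leadingCoeff / dconst m d' ≠ 0 :=
        div_ne_zero hlcf (dconst_ne_zero m d')
      have hw1ne : w1 ≠ 0 := by
        rw [hw1]
        exact mul_ne_zero (by simpa using hcne) (pow_ne_zero _ X_ne_zero)
      have hw1deg : w1.natDegree = d' := by
        rw [hw1, natDegree_C_mul hcne, natDegree_X_pow]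
      have hw1lc : w1.leadingCoeff = f.leadingCoeff / dconst m d' := by
        rw [hw1, leadingCoeff_mul, leadingCoeff_C, leadingCoeff_X_pow, mul_one]
      obtain ⟨h1, h2⟩ := key m w1 hw1ne
      rw [hw1deg] at h1 h2
      rw [hw1lc] at h2
      have hlc2 : (Δ^[m] (X ^ m * w1)).leadingCoeff = f.leadingCoeff := by
        rw [h2, mul_div_cancel₀ _ (dconst_ne_zero m d')]
      have hLne : Δ^[m] (X ^ m * w1) ≠ 0 := key_ne_zero m w1 hw1ne
      have hdegeq : (Δ^[m] (X ^ m * w1)).degree = f.degree := by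
        rw [degree_eq_natDegree hLne, degree_eq_natDegree hf0, h1]
      by_cases hg0 : f - Δ^[m] (X ^ m * w1) = 0
      · exact ⟨w1, by rw [← sub_eq_zero]; rw [sub_eq_zero] at hg0 ⊢; exact hg0.symm⟩
      · have hdlt : (f - Δ^[m] (X ^ m * w1)).degree < f.degree :=
          degree_sub_lt hdegeq.symm hf0 hlc2.symm
        have hndlt : (f - Δ^[m] (X ^ m * w1)).natDegree < f.natDegree :=
          natDegree_lt_natDegree hg0 hdlt
        obtain ⟨w2, hw2⟩ := ih (f - Δ^[m] (X ^ m * w1)).natDegree (by omega)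
          (f - Δ^[m] (X ^ m * w1)) le_rfl
        refine ⟨w1 + w2, ?_⟩
        rw [mul_add, delta_iter_add, hw2]
        ring

/-- For every `n ≥ 1` and every polynomial `f ∈ ℂ[z]` there is a unique
polynomial `w` with `Δ^{n-1}(z^{n-1} ⬝ w(z)) = f(z)`; i.e. `w ↦ Δ^{n-1}(z^{n-1} w)` is a
bijection of `ℂ[z]`. -/
theorem stmt8 (n : ℕ) (hn : 1 ≤ n) (f : Polynomial ℂ) :
    ∃! w : Polynomial ℂ, Δ^[n - 1] (X ^ (n - 1) * w) = f := by
  set m := n - 1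
  obtain ⟨w, hw⟩ := key_surj m f.natDegree f le_rfl
  refine ⟨w, hw, fun w' hw' => ?_⟩
  by_contra hne
  have hsub : w' - w ≠ 0 := sub_ne_zero.2 hne
  have : Δ^[m] (X ^ m * (w' - w)) = 0 := by
    rw [mul_sub, delta_iter_sub, hw, hw', sub_self]
  exact key_ne_zero m (w' - w) hsub this
end

section
/- Let A be an associative (not necessarily commutative) ℂ-algebra with unit, let φ, g ∈ ℂ[X] be polynomials satisfying g(X) − g(X−1) = φ(X) in ℂ[X], and suppose e, f, h ∈ A satisfy the relations h·e − e·h = e, h·f − f·h = −f, and e·f − f·e = φ(h), where φ(h) and g(h) denote evaluation of the polynomials at h. Then the element t = f·e + g(h) commutes with each of e, f, and h. -/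
open Polynomial

private lemma shift_lemma {A : Type*} [Ring A] [Algebra ℂ A] (h x : A) (c : ℂ)
    (hx : h * x = x * (h + algebraMap ℂ A c)) (p : Polynomial ℂ) :
    aeval h p * x = x * aeval (h + algebraMap ℂ A c) p := by
  induction p using Polynomial.induction_on' with
  | add p q hp hq => simp [add_mul, mul_add, hp, hq]
  | monomial n a =>
    have hpow : ∀ n : ℕ, h ^ n * x = x * (h + algebraMap ℂ A c) ^ n := by
      intro n
      induction n with
      | zero => simp
      | succ k ih =>
        rw [pow_succ', mul_assoc, ih, ← mul_assoc, hx, mul_assoc, ← pow_succ']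
    simp only [aeval_monomial]
    rw [mul_assoc, hpow, ← mul_assoc, ← mul_assoc]
    congr 1
    rw [Algebra.commutes]

/-- Let `A` be an associative unital `ℂ`-algebra, `φ, g ∈ ℂ[X]` with
`g(X) - g(X-1) = φ(X)`, and `e, f, h ∈ A` with `[h,e] = e`, `[h,f] = -f`,
`[e,f] = φ(h)`. Then `t = f e + g(h)` commutes with `e`, `f` and `h`. -/
theorem stmt9 (A : Type*) [Ring A] [Algebra ℂ A] (φ g : Polynomial ℂ)
    (hφg : g - g.comp (X - 1) = φ)
    (e f h : A)
    (he : h * e - e * h = e)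
    (hf : h * f - f * h = -f)
    (hef : e * f - f * e = aeval h φ) :
    (f * e + aeval h g) * e = e * (f * e + aeval h g) ∧
    (f * e + aeval h g) * f = f * (f * e + aeval h g) ∧
    (f * e + aeval h g) * h = h * (f * e + aeval h g) := by
  have he' : h * e = e * (h + algebraMap ℂ A 1) := by
    rw [mul_add, map_one, mul_one]
    exact sub_eq_iff_eq_add'.mp he
  have hf' : h * f = f * (h + algebraMap ℂ A (-1)) := by
    rw [map_neg, map_one, mul_add, mul_neg, mul_one]
    exact sub_eq_iff_eq_add'.mp hf
  have shifte := fun p => shift_lemma h e 1 he' p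
  have shiftf := fun p => shift_lemma h f (-1) hf' p
  have comp1 : ∀ (x : A) (p : Polynomial ℂ),
      aeval x (p.comp (X - 1)) = aeval (x - 1) p := by
    intro x p
    rw [aeval_comp]
    simp
  have hef' : e * f = f * e + aeval h φ := sub_eq_iff_eq_add'.mp hef
  have hfh : f * h = h * f + f := by
    have h2 := sub_eq_iff_eq_add'.mp hf
    rw [h2]; abel
  refine ⟨?_, ?_, ?_⟩
  · -- commute with e
    have key : aeval (h + algebraMap ℂ A 1) g
        = aeval h g + aeval (h + algebraMap ℂ A 1) φ := by
      have h3 := congrArg (aeval (h + algebraMap ℂ A 1)) hφg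
      simp only [map_sub, comp1, map_one, add_sub_cancel_right] at h3 ⊢
      exact sub_eq_iff_eq_add'.mp h3
    have hφe : aeval h φ * e = e * aeval (h + algebraMap ℂ A 1) φ := shifte φ
    calc (f * e + aeval h g) * e = f * e * e + aeval h g * e := by noncomm_ring
      _ = f * e * e + e * aeval (h + algebraMap ℂ A 1) g := by rw [shifte]
      _ = f * e * e + e * aeval h g + e * aeval (h + algebraMap ℂ A 1) φ := by
          rw [key]; noncomm_ring
      _ = f * e * e + e * aeval h g + aeval h φ * e := by rw [hφe]
      _ = e * (f * e + aeval h g) := by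
          rw [mul_add, ← mul_assoc, hef', add_mul]; abel
  · -- commute with f
    have key : aeval h φ + aeval (h + algebraMap ℂ A (-1)) g = aeval h g := by
      have h3 := congrArg (aeval h) hφg
      rw [map_sub, comp1] at h3
      have h1 : h - 1 = h + algebraMap ℂ A (-1) := by
        rw [map_neg, map_one, sub_eq_add_neg]
      rw [h1] at h3
      rw [← h3]; abel
    calc (f * e + aeval h g) * f = f * (e * f) + aeval h g * f := by noncomm_ring
      _ = f * (f * e + aeval h φ) + f * aeval (h + algebraMap ℂ A (-1)) g := by
          rw [hef', shiftf]
      _ = f * (f * e) + f * (aeval h φ + aeval (h + algebraMap ℂ A (-1)) g) := by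
          noncomm_ring
      _ = f * (f * e + aeval h g) := by rw [key]; noncomm_ring
  · -- commute with h
    have heh : e * h = h * e - e := by rw [sub_eq_iff_eq_add.mp he]; abel
    have hfe : f * e * h = h * (f * e) := by
      calc f * e * h = f * (e * h) := by rw [mul_assoc]
        _ = f * (h * e - e) := by rw [heh]
        _ = (f * h) * e - f * e := by noncomm_ring
        _ = (h * f + f) * e - f * e := by rw [hfh]
        _ = h * (f * e) := by noncomm_ring
    have hgh : aeval h g * h = h * aeval h g := by
      have := shift_lemma h h 0 (by simp) g
      simpa using this
    rw [add_mul, mul_add, hfe, hgh]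
end

section
/- Let n ≥ 1, N ≥ 1, and 1 ≤ j ≤ n. In the polynomial ring ℂ[x_1,…,x_n,c], the following identity holds: h_N(x_1,…,x_n) − h_N(x_1,…,x_j − c,…,x_n) = c · ∑_{i=0}^{N−1} h_{N−1−i}(x_1,…,x_n) · (x_j − c)^i, where on the left-hand side h_N is evaluated after replacing x_j by x_j − c. -/
open MvPolynomial Finset

lemma hpoly_rec (n m : ℕ) (a : Fin n) :
    hpoly n (m+1) =
      (∑ d ∈ (Finset.Nat.antidiagonalTuple n (m+1)).filter (fun d => d a = 0), ∏ i, X i ^ d i)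
        + X a * hpoly n m := by
  have hbij : ∑ e ∈ Finset.Nat.antidiagonalTuple n m,
        (X a : MvPolynomial (Fin n) ℂ) * ∏ i, X i ^ e i
      = ∑ d ∈ (Finset.Nat.antidiagonalTuple n (m+1)).filter (fun d => ¬ d a = 0),
        ∏ i, X i ^ d i := by
    refine Finset.sum_nbij' (fun e => Function.update e a (e a + 1))
      (fun d => Function.update d a (d a - 1)) ?_ ?_ ?_ ?_ ?_
    · intro e he
      simp only [Finset.Nat.mem_antidiagonalTuple] at he
      have h2 := Finset.sum_update_of_mem (Finset.mem_univ a) e (e a)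
      simp only [Function.update_idem, Function.update_eq_self] at h2
      simp only [Finset.mem_filter, Finset.Nat.mem_antidiagonalTuple]
      rw [Finset.sum_update_of_mem (Finset.mem_univ a)]
      constructor
      · omega
      · simp
    · intro d hd
      simp only [Finset.mem_filter, Finset.Nat.mem_antidiagonalTuple] at hd
      have h2 := Finset.sum_update_of_mem (Finset.mem_univ a) d (d a)
      simp only [Function.update_idem, Function.update_eq_self] at h2
      simp only [Finset.Nat.mem_antidiagonalTuple]
      rw [Finset.sum_update_of_mem (Finset.mem_univ a)]
      omega
    · intro e he
      funext i
      by_cases hi : i = a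
      · subst hi; simp
      · simp [Function.update_of_ne hi]
    · intro d hd
      simp only [Finset.mem_filter] at hd
      funext i
      by_cases hi : i = a
      · subst hi; simp; omega
      · simp [Function.update_of_ne hi]
    · intro e he
      have h1 : (fun i => (X i : MvPolynomial (Fin n) ℂ) ^ Function.update e a (e a + 1) i)
          = Function.update (fun i => (X i : MvPolynomial (Fin n) ℂ) ^ e i) a
              (X a ^ (e a + 1)) := by
        funext i
        by_cases hi : i = a
        · subst hi; simp
        · simp [Function.update_of_ne hi]
      rw [h1, Finset.prod_update_of_mem (Finset.mem_univ a),
        ← Finset.mul_prod_erase Finset.univ _ (Finset.mem_univ a), ← mul_assoc, ← pow_succ', Finset.sdiff_singleton_eq_erase]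
  rw [hpoly, hpoly, Finset.mul_sum, hbij,
    Finset.sum_filter_add_sum_filter_not (Finset.Nat.antidiagonalTuple n (m+1))
      (fun d => d a = 0)]

lemma key_s11 (n : ℕ) (a : Fin n) (φ ψ : Fin n → MvPolynomial (Fin n ⊕ Unit) ℂ)
    (h : ∀ j, j ≠ a → φ j = ψ j) (N : ℕ) :
    aeval φ (hpoly n N) - aeval ψ (hpoly n N) =
      (φ a - ψ a) * ∑ i ∈ Finset.range N, aeval φ (hpoly n (N-1-i)) * (ψ a)^i := by
  induction N with
  | zero => simp [hpoly, Finset.Nat.antidiagonalTuple_zero_right]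
  | succ N ih =>
    have hR : aeval (R := ℂ) φ (∑ d ∈ (Finset.Nat.antidiagonalTuple n (N+1)).filter (fun d => d a = 0),
          ∏ i, X i ^ d i) =
        aeval (R := ℂ) ψ (∑ d ∈ (Finset.Nat.antidiagonalTuple n (N+1)).filter (fun d => d a = 0),
          ∏ i, X i ^ d i) := by
      simp only [map_sum, map_prod]
      refine Finset.sum_congr rfl fun d hd => ?_
      simp only [Finset.mem_filter] at hd
      refine Finset.prod_congr rfl fun i _ => ?_
      by_cases hi : i = a
      · subst hi; simp [hd.2]
      · simp [h i hi]
    rw [hpoly_rec n N a, map_add, map_add, map_mul, map_mul, aeval_X, aeval_X, hR,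
      Finset.sum_range_succ']
    simp only [Nat.add_sub_cancel, Nat.sub_zero, pow_zero, mul_one]
    have hs : ∑ i ∈ Finset.range N, aeval φ (hpoly n (N-(i+1))) * (ψ a)^(i+1)
        = ψ a * ∑ i ∈ Finset.range N, aeval φ (hpoly n (N-1-i)) * (ψ a)^i := by
      rw [Finset.mul_sum]
      refine Finset.sum_congr rfl fun i _ => ?_
      rw [show N - (i+1) = N - 1 - i from by omega]
      ring
    rw [hs]
    linear_combination ψ a * ih

/-- In `ℂ[x_1, …, x_n, c]`, for `N ≥ 1` and an index `a`,
`h_N(x) - h_N(x_1, …, x_a - c, …, x_n) = c ⬝ ∑_{i=0}^{N-1} h_{N-1-i}(x) (x_a - c)^i`. -/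
theorem stmt11 (n N : ℕ) (hn : 1 ≤ n) (hN : 1 ≤ N) (a : Fin n) :
    aeval (fun j : Fin n => (X (Sum.inl j) : MvPolynomial (Fin n ⊕ Unit) ℂ)) (hpoly n N) -
      aeval (fun j : Fin n =>
          if j = a then (X (Sum.inl a) : MvPolynomial (Fin n ⊕ Unit) ℂ) - X (Sum.inr ())
          else X (Sum.inl j)) (hpoly n N) =
    X (Sum.inr ()) *
      ∑ i ∈ Finset.range N,
        aeval (fun j : Fin n => (X (Sum.inl j) : MvPolynomial (Fin n ⊕ Unit) ℂ))
            (hpoly n (N - 1 - i)) *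
          ((X (Sum.inl a) : MvPolynomial (Fin n ⊕ Unit) ℂ) - X (Sum.inr ())) ^ i := by
  have := key_s11 n a (fun j => X (Sum.inl j))
    (fun j => if j = a then (X (Sum.inl a) : MvPolynomial (Fin n ⊕ Unit) ℂ) - X (Sum.inr ())
      else X (Sum.inl j)) (fun j hj => by simp [hj]) N
  simpa using this
end

section
/- Let n ≥ 1, N ≥ 0 be integers and let s_1,…,s_n be nonnegative integers with S = s_1 + ⋯ + s_n. Then ∑ ∏_{i=1}^{n} (s_i + c_i(σ))! / s_i! = ∏_{r=0}^{N−1} (S + n + r), where the sum ranges over all sequences σ = (j_1,…,j_N) ∈ {1,…,n}^N and c_i(σ) = #{l ∈ {1,…,N} : j_l = i} is the number of occurrences of i in σ. -/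
/-!
Each summand is the ℕ-valued product `∏ i, (s i + 1)(s i + 2)⋯(s i + c_i σ)`. Prepending a letter `j`
to a word `σ` multiplies it by `s j + 1 + c_j σ`, and these factors sum over `j` to `S + n + N`
because the counts `c_j σ` sum to `N`. Induction on the length `N` then gives the rising factorial
`(S + n)(S + n + 1)⋯(S + n + N - 1)`.
-/

open Finset
open scoped Nat

variable {ι : Type*} [DecidableEq ι]

lemma card_filter_cons_eq {N : ℕ} (j : ι) (σ : Fin N → ι) (i : ι) :
    #{l | (Fin.cons j σ : Fin (N + 1) → ι) l = i} = #{l | σ l = i} + if j = i then 1 else 0 := by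
  rw [Fin.card_filter_univ_succ']
  simp [add_comm]

lemma sum_card_filter_eq [Fintype ι] {α : Type*} [Fintype α] (σ : α → ι) :
    ∑ i, #{l | σ l = i} = Fintype.card α :=
  (card_eq_sum_card_fiberwise fun l _ => mem_univ (σ l)).symm

lemma prod_ascFactorial_update [Fintype ι] (s c : ι → ℕ) (j : ι) :
    ∏ i, (s i + 1).ascFactorial (c i + if j = i then 1 else 0) =
      (s j + 1 + c j) * ∏ i, (s i + 1).ascFactorial (c i) := by
  rw [← mul_prod_erase univ _ (mem_univ j), ← mul_prod_erase univ _ (mem_univ j), ← mul_assoc,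
    if_pos rfl, Nat.ascFactorial_succ]
  congr 1
  refine prod_congr rfl fun i hi => ?_
  rw [if_neg (ne_of_mem_erase hi).symm, add_zero]

theorem sum_prod_ascFactorial_card_filter [Fintype ι] (s : ι → ℕ) (N : ℕ) :
    ∑ σ : Fin N → ι, ∏ i, (s i + 1).ascFactorial #{l | σ l = i} =
      (∑ i, s i + Fintype.card ι).ascFactorial N := by
  induction N with
  | zero => simp
  | succ N ih =>
    calc ∑ σ : Fin (N + 1) → ι, ∏ i, (s i + 1).ascFactorial #{l | σ l = i}
        = ∑ σ : Fin N → ι, ∑ j, (s j + 1 + #{l | σ l = j}) *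
            ∏ i, (s i + 1).ascFactorial #{l | σ l = i} := by
          rw [← (Fin.consEquiv fun _ => ι).sum_comp, Fintype.sum_prod_type, sum_comm]
          simp only [Fin.consEquiv_apply, card_filter_cons_eq, prod_ascFactorial_update]
      _ = (∑ i, s i + Fintype.card ι + N) * (∑ i, s i + Fintype.card ι).ascFactorial N := by
          simp only [← sum_mul, ← ih, mul_sum]
          refine sum_congr rfl fun σ _ => ?_
          rw [sum_add_distrib, sum_add_distrib, sum_card_filter_eq, Fintype.card_fin]
          simp [Finset.card_univ, add_assoc]
      _ = (∑ i, s i + Fintype.card ι).ascFactorial (N + 1) := Nat.ascFactorial_succ.symm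

lemma factorial_add_div_factorial_eq_ascFactorial (a k : ℕ) :
    ((a + k)! / a ! : ℚ) = (a + 1).ascFactorial k := by
  rw [← Nat.factorial_mul_ascFactorial, Nat.cast_mul, mul_div_cancel_left₀ _ (by positivity)]

theorem stmt12_general (n N : ℕ) (s : Fin n → ℕ) :
    ∑ σ : Fin N → Fin n,
        ∏ i : Fin n,
          ((Nat.factorial (s i + (Finset.univ.filter fun l => σ l = i).card) : ℚ) /
            (Nat.factorial (s i) : ℚ)) =
      ∏ r ∈ Finset.range N, (((∑ i, s i) + n + r : ℕ) : ℚ) := by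
  simp only [factorial_add_div_factorial_eq_ascFactorial]
  exact_mod_cast (sum_prod_ascFactorial_card_filter s N).trans
    (by rw [Fintype.card_fin, Nat.ascFactorial_eq_prod_range])

/-- For nonnegative integers `s_1, …, s_n` with sum `S`,
`∑_{σ ∈ {1,…,n}^N} ∏_i (s_i + c_i(σ))! / s_i! = ∏_{r=0}^{N-1} (S + n + r)`,
where `c_i(σ)` is the number of occurrences of `i` in `σ`. -/
theorem stmt12 (n N : ℕ) (hn : 1 ≤ n) (s : Fin n → ℕ) :
    ∑ σ : Fin N → Fin n,
        ∏ i : Fin n,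
          ((Nat.factorial (s i + (Finset.univ.filter fun l => σ l = i).card) : ℚ) /
            (Nat.factorial (s i) : ℚ)) =
      ∏ r ∈ Finset.range N, (((∑ i, s i) + n + r : ℕ) : ℚ) :=
  stmt12_general n N s
end

section
/- Let n ≥ 1, let k_1 > k_2 > ⋯ > k_n be integers, let ν_1,…,ν_n be nonnegative integers satisfying ν_i ≤ k_i − k_{i+1} − 1 for all 1 ≤ i ≤ n−1, let 1 ≤ l ≤ n with ν_l ≥ 1, and let ν' be an integer with 0 ≤ ν' < ν_l. Then the (n+1)×(n+1) matrix M with entries M_{i,j} = (ν_i + 1)·(k_i − ν_i − 1)^{j−1} for 1 ≤ i ≤ n, 1 ≤ j ≤ n+1, and M_{n+1,j} = (ν' + 1)·(k_l − ν' − 1)^{j−1} for 1 ≤ j ≤ n+1, has nonzero determinant; explicitly, det M = (ν'+1)·∏_{i=1}^{n}(ν_i+1) · ∏_{i=1}^{n}(k_l − k_i + ν_i − ν') · ∏_{1≤i<j≤n}(k_j − k_i + ν_i − ν_j) ≠ 0. -/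
open Finset

lemma aux_Ioi_castSucc {n : ℕ} (i : Fin n) :
    Finset.Ioi i.castSucc = insert (Fin.last n) ((Finset.Ioi i).map Fin.castSuccEmb) := by
  ext j
  refine Fin.lastCases ?_ (fun j => ?_) j
  · simp [Fin.castSucc_lt_last]
  · simp only [Finset.mem_Ioi, Finset.mem_insert, Finset.mem_map, Fin.coe_castSuccEmb]
    constructor
    · intro h
      exact Or.inr ⟨j, Fin.castSucc_lt_castSucc_iff.mp h, rfl⟩
    · rintro (h | ⟨a, ha, h⟩)
      · exact absurd h (Fin.castSucc_lt_last j).ne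
      · rw [← Fin.castSucc_injective n h]
        exact Fin.castSucc_lt_castSucc_iff.mpr ha

lemma aux_last_notMem {n : ℕ} (s : Finset (Fin n)) :
    Fin.last n ∉ s.map Fin.castSuccEmb := by
  simp only [Finset.mem_map, Fin.coe_castSuccEmb, not_exists]
  intro a
  exact fun h => absurd h.2 (Fin.castSucc_lt_last a).ne

/-- Vandermonde-type determinant. With `k_1 > ⋯ > k_n` integers,
`ν_i ≤ k_i - k_{i+1} - 1` for `i < n`, an index `l` with `ν_l ≥ 1` and `0 ≤ ν' < ν_l`,
the `(n+1) × (n+1)` matrix with rows `(ν_i + 1)(k_i - ν_i - 1)^{j-1}` (for `i ≤ n`) and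
last row `(ν' + 1)(k_l - ν' - 1)^{j-1}` has determinant
`(ν'+1) ∏_i (ν_i+1) ⬝ ∏_i (k_l - k_i + ν_i - ν') ⬝ ∏_{i<j} (k_j - k_i + ν_i - ν_j) ≠ 0`. -/
theorem stmt13 (n : ℕ) (hn : 1 ≤ n) (k : Fin n → ℤ) (hk : StrictAnti k)
    (ν : Fin n → ℕ)
    (hν : ∀ (i : Fin n) (h : (i : ℕ) + 1 < n),
      (ν i : ℤ) ≤ k i - k ⟨(i : ℕ) + 1, h⟩ - 1)
    (l : Fin n) (hl : 1 ≤ ν l) (ν' : ℕ) (hν' : ν' < ν l) :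
    (Matrix.of fun i j : Fin (n + 1) =>
        if h : (i : ℕ) < n then
          ((ν ⟨i, h⟩ + 1 : ℕ) : ℂ) * ((k ⟨i, h⟩ : ℂ) - (ν ⟨i, h⟩ : ℕ) - 1) ^ (j : ℕ)
        else ((ν' + 1 : ℕ) : ℂ) * ((k l : ℂ) - (ν' : ℕ) - 1) ^ (j : ℕ)).det =
      ((ν' + 1 : ℕ) : ℂ) * (∏ i : Fin n, ((ν i + 1 : ℕ) : ℂ)) *
        (∏ i : Fin n, ((k l : ℂ) - (k i : ℤ) + (ν i : ℕ) - (ν' : ℕ))) *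
        ∏ i : Fin n, ∏ j ∈ Finset.Ioi i, ((k j : ℂ) - (k i : ℤ) + (ν i : ℕ) - (ν j : ℕ)) ∧
    (Matrix.of fun i j : Fin (n + 1) =>
        if h : (i : ℕ) < n then
          ((ν ⟨i, h⟩ + 1 : ℕ) : ℂ) * ((k ⟨i, h⟩ : ℂ) - (ν ⟨i, h⟩ : ℕ) - 1) ^ (j : ℕ)
        else ((ν' + 1 : ℕ) : ℂ) * ((k l : ℂ) - (ν' : ℕ) - 1) ^ (j : ℕ)).det ≠ 0 := by
  -- key integer inequality
  have hij : ∀ i j : Fin n, i < j → (k j : ℤ) - k i + ν i ≤ -1 := by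
    intro i j hij'
    have h1 : (i : ℕ) + 1 < n := lt_of_le_of_lt (Nat.succ_le_of_lt hij') j.isLt
    have h2 := hν i h1
    have h3 : k j ≤ k ⟨(i : ℕ) + 1, h1⟩ := by
      apply hk.antitone
      rw [Fin.le_def]
      exact Nat.succ_le_of_lt hij'
    linarith
  have hfac1 : ∀ i : Fin n, (k l : ℤ) - k i + ν i - ν' ≠ 0 := by
    intro i
    rcases lt_trichotomy i l with h | h | h
    · have := hij i l h
      have : (k l : ℤ) - k i + ν i - ν' ≤ -1 - ν' := by linarith
      have hv : (0 : ℤ) ≤ (ν' : ℤ) := Int.ofNat_nonneg _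
      omega
    · subst h
      have : (ν' : ℤ) < (ν i : ℤ) := by exact_mod_cast hν'
      omega
    · have := hij l i h
      have hv : (ν' : ℤ) < (ν l : ℤ) := by exact_mod_cast hν'
      have hvi : (0 : ℤ) ≤ (ν i : ℤ) := Int.ofNat_nonneg _
      omega
  have hfac2 : ∀ i j : Fin n, i < j → (k j : ℤ) - k i + ν i - ν j ≠ 0 := by
    intro i j h
    have := hij i j h
    have : (0 : ℤ) ≤ (ν j : ℤ) := Int.ofNat_nonneg _
    omega
  -- abbreviations
  set x : Fin (n + 1) → ℂ := fun i =>
    if h : (i : ℕ) < n then (k ⟨i, h⟩ : ℂ) - (ν ⟨i, h⟩ : ℕ) - 1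
    else (k l : ℂ) - (ν' : ℕ) - 1 with hx
  set c : Fin (n + 1) → ℂ := fun i =>
    if h : (i : ℕ) < n then ((ν ⟨i, h⟩ + 1 : ℕ) : ℂ) else ((ν' + 1 : ℕ) : ℂ) with hc
  have hxc : ∀ i : Fin n, x i.castSucc = (k i : ℂ) - (ν i : ℕ) - 1 := by
    intro i; simp [hx, Fin.castSucc]
  have hxl : x (Fin.last n) = (k l : ℂ) - (ν' : ℕ) - 1 := by
    simp [hx, Fin.last]
  have hcc : ∀ i : Fin n, c i.castSucc = ((ν i + 1 : ℕ) : ℂ) := by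
    intro i; simp [hc, Fin.castSucc]
  have hcl : c (Fin.last n) = ((ν' + 1 : ℕ) : ℂ) := by
    simp [hc, Fin.last]
  have hM : (Matrix.of fun i j : Fin (n + 1) =>
        if h : (i : ℕ) < n then
          ((ν ⟨i, h⟩ + 1 : ℕ) : ℂ) * ((k ⟨i, h⟩ : ℂ) - (ν ⟨i, h⟩ : ℕ) - 1) ^ (j : ℕ)
        else ((ν' + 1 : ℕ) : ℂ) * ((k l : ℂ) - (ν' : ℕ) - 1) ^ (j : ℕ)) =
      Matrix.of fun i j => c i * Matrix.vandermonde x i j := by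
    ext i j
    by_cases h : (i : ℕ) < n <;> simp [Matrix.vandermonde, hx, hc, h]
  have e1 : ∏ i, c i = ((ν' + 1 : ℕ) : ℂ) * ∏ i : Fin n, ((ν i + 1 : ℕ) : ℂ) := by
    rw [Fin.prod_univ_castSucc, hcl]
    rw [Finset.prod_congr rfl fun i _ => hcc i]
    ring
  have hIoilast : Finset.Ioi (Fin.last n) = (∅ : Finset (Fin (n + 1))) := by
    ext j
    simp only [Finset.mem_Ioi, Finset.notMem_empty, iff_false]
    exact Fin.not_lt.mpr (Fin.le_last j)
  have e2 : ∏ i, ∏ j ∈ Finset.Ioi i, (x j - x i) =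
      (∏ i : Fin n, ((k l : ℂ) - (k i : ℤ) + (ν i : ℕ) - (ν' : ℕ))) *
        ∏ i : Fin n, ∏ j ∈ Finset.Ioi i, ((k j : ℂ) - (k i : ℤ) + (ν i : ℕ) - (ν j : ℕ)) := by
    rw [Fin.prod_univ_castSucc, hIoilast, Finset.prod_empty, mul_one]
    have : ∀ i : Fin n, ∏ j ∈ Finset.Ioi i.castSucc, (x j - x i.castSucc) =
        ((k l : ℂ) - (k i : ℤ) + (ν i : ℕ) - (ν' : ℕ)) *
          ∏ j ∈ Finset.Ioi i, ((k j : ℂ) - (k i : ℤ) + (ν i : ℕ) - (ν j : ℕ)) := by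
      intro i
      rw [aux_Ioi_castSucc, Finset.prod_insert (aux_last_notMem _), Finset.prod_map]
      have h1 : x (Fin.last n) - x i.castSucc =
          (k l : ℂ) - (k i : ℤ) + (ν i : ℕ) - (ν' : ℕ) := by
        rw [hxl, hxc]; push_cast; ring
      rw [h1]
      congr 1
      refine Finset.prod_congr rfl fun j _ => ?_
      show x j.castSucc - x i.castSucc = _
      rw [hxc, hxc]; push_cast; ring
    rw [Finset.prod_congr rfl fun i _ => this i, Finset.prod_mul_distrib]
  have key : (Matrix.of fun i j : Fin (n + 1) =>
        if h : (i : ℕ) < n then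
          ((ν ⟨i, h⟩ + 1 : ℕ) : ℂ) * ((k ⟨i, h⟩ : ℂ) - (ν ⟨i, h⟩ : ℕ) - 1) ^ (j : ℕ)
        else ((ν' + 1 : ℕ) : ℂ) * ((k l : ℂ) - (ν' : ℕ) - 1) ^ (j : ℕ)).det =
      ((ν' + 1 : ℕ) : ℂ) * (∏ i : Fin n, ((ν i + 1 : ℕ) : ℂ)) *
        (∏ i : Fin n, ((k l : ℂ) - (k i : ℤ) + (ν i : ℕ) - (ν' : ℕ))) *
        ∏ i : Fin n, ∏ j ∈ Finset.Ioi i, ((k j : ℂ) - (k i : ℤ) + (ν i : ℕ) - (ν j : ℕ)) := by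
    rw [hM]
    rw [show (Matrix.of fun i j => c i * Matrix.vandermonde x i j).det =
      (∏ i, c i) * (Matrix.vandermonde x).det from Matrix.det_mul_column c _]
    rw [Matrix.det_vandermonde, e1, e2]
    ring
  refine ⟨key, ?_⟩
  rw [key]
  apply mul_ne_zero
  apply mul_ne_zero
  apply mul_ne_zero
  · exact_mod_cast Nat.succ_ne_zero ν'
  · exact Finset.prod_ne_zero_iff.mpr fun i _ => by exact_mod_cast Nat.succ_ne_zero (ν i)
  · refine Finset.prod_ne_zero_iff.mpr fun i _ => ?_
    rw [show (k l : ℂ) - (k i : ℤ) + (ν i : ℕ) - (ν' : ℕ) =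
        (((k l : ℤ) - k i + ν i - ν' : ℤ) : ℂ) by push_cast; ring]
    exact_mod_cast hfac1 i
  · refine Finset.prod_ne_zero_iff.mpr fun i _ => Finset.prod_ne_zero_iff.mpr fun j hj => ?_
    rw [show (k j : ℂ) - (k i : ℤ) + (ν i : ℕ) - (ν j : ℕ) =
        (((k j : ℤ) - k i + ν i - ν j : ℤ) : ℂ) by push_cast; ring]
    exact_mod_cast hfac2 i j (Finset.mem_Ioi.mp hj)
end

section
/- Let n ≥ 1, let k_1 > k_2 > ⋯ > k_{n−1} > k_n = 0 be integers, let ν_1,…,ν_n be nonnegative integers satisfying ν_i ≤ k_i − k_{i+1} − 1 for all 1 ≤ i ≤ n−1, and let c ∈ ℂ. Set λ' = (c + k_1, c + k_2, …, c + k_n) ∈ ℂ^n. Then there exist complex numbers w_1,…,w_{n+1} such that, defining P(x_1,…,x_n) = ∑_{j=1}^{n+1} w_j · h_j(x_1,…,x_n), the following hold: (i) P(λ') = P(λ' − (ν_i + 1)·e_i) for every 1 ≤ i ≤ n; and (ii) P(λ') ≠ P(λ' − s·e_i) for every 1 ≤ i ≤ n and every integer s with 1 ≤ s ≤ ν_i,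 where e_1,…,e_n are the standard basis vectors of ℂ^n. -/
/-!
Write `E(y) = ∏ᵢ (1 - yᵢ X)`, so that `∑_p h_p(y) X^p = 1 / E(y)`. Put `gⱼ = λ'ⱼ - νⱼ - 1` and
let `w_j` be the coefficient of `X^(n-j)` in `E(λ') E(g)`. From
`h_{q+1}(x) - h_{q+1}(x with xᵢ ↦ t) = (xᵢ - t) h_q(t, x)` and
`∑_j w_j h_j(t, λ') = [X^n] E(λ') E(g) / (E(λ') (1 - tX)) = ∏ⱼ (t - gⱼ)` we get
`P(λ') - P(λ' with λ'ᵢ ↦ t) = (λ'ᵢ - t) ∏ⱼ (t - gⱼ)`.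
Taking `t = gᵢ` gives (i); for (ii), the gaps `νᵢ < kᵢ - kᵢ₊₁` keep `λ'ᵢ - s` away from every `gⱼ`.
-/

/-- Evaluation of the complete homogeneous symmetric polynomial of degree `p`
at a point `x ∈ ℂ^n`. -/
noncomputable def hval (n : ℕ) (x : Fin n → ℂ) (p : ℕ) : ℂ :=
  ∑ d ∈ Finset.Nat.antidiagonalTuple n p, ∏ i, x i ^ d i

open Finset hiding mk
open PowerSeries

section PowerSeries

variable {R : Type*} [CommRing R]

theorem PowerSeries.one_sub_C_mul_X_mul_mk_pow (t : R) : (1 - C t * X) * mk (t ^ ·) = 1 := by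
  have h := congrArg (rescale t) (mk_one_mul_one_sub_eq_one (S := R))
  rw [map_mul, map_sub, map_one, rescale_mk, rescale_X, mul_comm] at h
  simpa using h

theorem PowerSeries.coeff_succ_one_sub_C_mul_X_mul (a : R) (T : R⟦X⟧) (m : ℕ) :
    coeff (m + 1) ((1 - C a * X) * T) = coeff (m + 1) T - a * coeff m T := by
  rw [sub_mul, one_mul, map_sub, mul_assoc, coeff_C_mul, coeff_succ_X_mul]

theorem PowerSeries.coeff_prod_one_sub_C_mul_X_mul_mk_pow {N : ℕ} (y : Fin N → R) (t : R)
    (q : ℕ) :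
    coeff (N + q) ((∏ i, (1 - C (y i) * X)) * mk (t ^ ·)) = t ^ q * ∏ i, (t - y i) := by
  induction N generalizing q with
  | zero => simp
  | succ N ih =>
    cases y using Fin.consCases with | _ y₀ y =>
    simp only [Fin.prod_univ_succ, Fin.cons_zero, Fin.cons_succ, mul_assoc]
    rw [show N + 1 + q = N + q + 1 by omega, coeff_succ_one_sub_C_mul_X_mul,
      show N + q + 1 = N + (q + 1) by omega, ih, ih]
    ring

end PowerSeries

theorem hval_fin_zero (x : Fin 0 → ℂ) (q : ℕ) : hval 0 x q = if q = 0 then 1 else 0 := by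
  cases q <;> simp [hval, Finset.Nat.antidiagonalTuple_zero_right,
    Finset.Nat.antidiagonalTuple_zero_succ]

theorem hval_cons {N : ℕ} (u : ℂ) (z : Fin N → ℂ) (q : ℕ) :
    hval (N + 1) (Fin.cons u z) q = ∑ ab ∈ antidiagonal q, u ^ ab.1 * hval N z ab.2 := by
  simp_rw [hval, mul_sum, sum_sigma']
  refine sum_nbij' (fun d => ⟨(d 0, ∑ i, Fin.tail d i), Fin.tail d⟩)
    (fun p => Fin.cons p.1.1 p.2) ?_ ?_ ?_ ?_ ?_
  · intro d hd
    rw [Finset.Nat.mem_antidiagonalTuple, Fin.sum_univ_succ] at hd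
    simpa [Finset.Nat.mem_antidiagonalTuple, Fin.tail] using hd
  · rintro ⟨⟨a, b⟩, d⟩ hp
    simp_all [Finset.Nat.mem_antidiagonalTuple, Fin.sum_univ_succ]
  · intro d _
    exact Fin.cons_self_tail d
  · rintro ⟨⟨a, b⟩, d⟩ hp
    simp_all [Finset.Nat.mem_antidiagonalTuple]
  · intro d _
    simp [Fin.prod_univ_succ, Fin.tail]

theorem hval_comp_perm {N : ℕ} (z : Fin N → ℂ) (σ : Equiv.Perm (Fin N)) (q : ℕ) :
    hval N (z ∘ σ) q = hval N z q := by
  refine sum_nbij' (· ∘ σ.symm) (· ∘ σ) ?_ ?_ ?_ ?_ ?_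
  · intro d hd
    simpa [Finset.Nat.mem_antidiagonalTuple, Equiv.sum_comp] using hd
  · intro d hd
    simpa [Finset.Nat.mem_antidiagonalTuple, Equiv.sum_comp] using hd
  · intro d _
    ext; simp
  · intro d _
    ext; simp
  · intro d _
    simpa using Equiv.prod_comp σ fun j => z j ^ d (σ.symm j)

theorem mk_hval_cons {N : ℕ} (u : ℂ) (z : Fin N → ℂ) :
    mk (hval (N + 1) (Fin.cons u z)) = mk (u ^ ·) * mk (hval N z) := by
  ext q
  simp [coeff_mul, hval_cons]

theorem prod_one_sub_C_mul_X_mul_mk_hval {N : ℕ} (z : Fin N → ℂ) :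
    (∏ i, (1 - C (z i) * X)) * mk (hval N z) = 1 := by
  induction N with
  | zero =>
    ext q
    simp [hval_fin_zero, coeff_one]
  | succ N ih =>
    cases z using Fin.consCases with | _ u z =>
    simp only [Fin.prod_univ_succ, Fin.cons_zero, Fin.cons_succ, mk_hval_cons]
    calc (1 - C u * X) * (∏ i, (1 - C (z i) * X)) * (mk (u ^ ·) * mk (hval N z))
        = ((1 - C u * X) * mk (u ^ ·)) * ((∏ i, (1 - C (z i) * X)) * mk (hval N z)) := by ring
      _ = 1 := by rw [one_sub_C_mul_X_mul_mk_pow, ih, one_mul]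

theorem hval_cons_succ {N : ℕ} (u : ℂ) (z : Fin N → ℂ) (q : ℕ) :
    hval (N + 1) (Fin.cons u z) (q + 1) = hval N z (q + 1) + u * hval (N + 1) (Fin.cons u z) q := by
  have h : (1 - C u * X) * mk (hval (N + 1) (Fin.cons u z)) = mk (hval N z) := by
    rw [mk_hval_cons, ← mul_assoc, one_sub_C_mul_X_mul_mk_pow, one_mul]
  have := congrArg (coeff (q + 1)) h
  rw [coeff_succ_one_sub_C_mul_X_mul, coeff_mk, coeff_mk, coeff_mk] at this
  linear_combination this

theorem hval_sub_hval_update {n : ℕ} (x : Fin n → ℂ) (i : Fin n) (t : ℂ) (q : ℕ) :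
    hval n x (q + 1) - hval n (Function.update x i t) (q + 1)
      = (x i - t) * hval (n + 1) (Fin.cons t x) q := by
  have hswap : Fin.cons (x i) (Function.update x i t)
      = (Fin.cons t x : Fin (n + 1) → ℂ) ∘ Equiv.swap 0 i.succ := by
    ext j
    cases j using Fin.cases with
    | zero => simp
    | succ j =>
      by_cases hj : j = i
      · simp [hj]
      · simp [Equiv.swap_apply_of_ne_of_ne (Fin.succ_ne_zero j) (Fin.succ_inj.not.2 hj), hj]
  have h₁ := hval_cons_succ (x i) (Function.update x i t) q
  have h₂ := hval_cons_succ t x q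
  rw [hswap, hval_comp_perm, hval_comp_perm] at h₁
  linear_combination h₁ - h₂

theorem sum_coeff_mul_hval_cons {n : ℕ} (x g : Fin n → ℂ) (t : ℂ) :
    ∑ j : Fin (n + 1),
        coeff (n - j) ((∏ i, (1 - C (x i) * X)) * ∏ i, (1 - C (g i) * X))
          * hval (n + 1) (Fin.cons t x) j
      = ∏ i, (t - g i) := by
  have hgeom : (∏ i, (1 - C (x i) * X)) * mk (hval (n + 1) (Fin.cons t x)) = mk (t ^ ·) := by
    rw [mk_hval_cons, mul_left_comm, prod_one_sub_C_mul_X_mul_mk_hval, mul_one]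
  have hcoeff : coeff n (mk (hval (n + 1) (Fin.cons t x))
      * ((∏ i, (1 - C (x i) * X)) * ∏ i, (1 - C (g i) * X))) = ∏ i, (t - g i) := by
    rw [mul_left_comm, ← mul_assoc, hgeom, mul_comm]
    simpa using coeff_prod_one_sub_C_mul_X_mul_mk_pow g t 0
  rw [← hcoeff, coeff_mul, Finset.Nat.sum_antidiagonal_eq_sum_range_succ
    (fun a b => coeff a (mk _) * coeff b _), ← Fin.sum_univ_eq_sum_range]
  simp [mul_comm]

theorem exists_weights_hval_sub_hval_update_eq_prod {n : ℕ} (x g : Fin n → ℂ) :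
    ∃ w : Fin (n + 1) → ℂ, ∀ i t,
      ∑ j, w j * hval n x (j + 1) - ∑ j, w j * hval n (Function.update x i t) (j + 1)
        = (x i - t) * ∏ j, (t - g j) := by
  refine ⟨fun j => coeff (n - j) ((∏ i, (1 - C (x i) * X)) * ∏ i, (1 - C (g i) * X)),
    fun i t => ?_⟩
  simp_rw [← sum_sub_distrib, ← mul_sub, hval_sub_hval_update, mul_left_comm _ (x i - t),
    ← mul_sum, sum_coeff_mul_hval_cons]

theorem sub_ne_sub_sub_one_of_gaps {n : ℕ} {k : Fin n → ℤ} (hk : StrictAnti k) {ν : Fin n → ℕ}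
    (hν : ∀ (i : Fin n) (h : (i : ℕ) + 1 < n), (ν i : ℤ) ≤ k i - k ⟨(i : ℕ) + 1, h⟩ - 1)
    {i : Fin n} {s : ℕ} (hs₀ : 1 ≤ s) (hs : s ≤ ν i) (j : Fin n) :
    k i - s ≠ k j - ν j - 1 := by
  rcases lt_trichotomy j i with hji | rfl | hij
  · have hj : (j : ℕ) + 1 < n := by omega
    have := hk.antitone (a := ⟨j + 1, hj⟩) (b := i) hji
    have := hν j hj
    omega
  · omega
  · have hi : (i : ℕ) + 1 < n := by omega
    have := hk.antitone (a := ⟨i + 1, hi⟩) (b := j) hij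
    have := hν i hi
    omega

/-- Given integers `k_1 > ⋯ > k_{n-1} > k_n = 0`, nonnegative integers
`ν_i ≤ k_i - k_{i+1} - 1` (for `i < n`), and `c ∈ ℂ`, set `λ'_i = c + k_i`. Then there
exist `w_1, …, w_{n+1} ∈ ℂ` such that `P(x) = ∑_{j=1}^{n+1} w_j h_j(x)` satisfies
`P(λ') = P(λ' - (ν_i+1) e_i)` for all `i`, and `P(λ') ≠ P(λ' - s e_i)` for all `i` and
all `1 ≤ s ≤ ν_i`. -/
theorem stmt14 (n : ℕ) (k : Fin n → ℤ) (hk : StrictAnti k)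
    (ν : Fin n → ℕ)
    (hν : ∀ (i : Fin n) (h : (i : ℕ) + 1 < n),
      (ν i : ℤ) ≤ k i - k ⟨(i : ℕ) + 1, h⟩ - 1)
    (c : ℂ) :
    ∃ w : Fin (n + 1) → ℂ,
      (∀ i : Fin n,
        (∑ j : Fin (n + 1), w j * hval n (fun i' => c + (k i' : ℂ)) ((j : ℕ) + 1)) =
          ∑ j : Fin (n + 1),
            w j * hval n
              (Function.update (fun i' => c + (k i' : ℂ)) i (c + (k i : ℂ) - ((ν i : ℕ) + 1)))
              ((j : ℕ) + 1)) ∧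
      (∀ i : Fin n, ∀ s : ℕ, 1 ≤ s → s ≤ ν i →
        (∑ j : Fin (n + 1), w j * hval n (fun i' => c + (k i' : ℂ)) ((j : ℕ) + 1)) ≠
          ∑ j : Fin (n + 1),
            w j * hval n
              (Function.update (fun i' => c + (k i' : ℂ)) i (c + (k i : ℂ) - (s : ℕ)))
              ((j : ℕ) + 1)) := by
  obtain ⟨w, hw⟩ := exists_weights_hval_sub_hval_update_eq_prod (fun i => c + (k i : ℂ))
    (fun j => c + (k j : ℂ) - ((ν j : ℕ) + 1))
  refine ⟨w, fun i => ?_, fun i s hs₀ hs heq => ?_⟩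
  · rw [← sub_eq_zero, hw, prod_eq_zero (mem_univ i) (sub_self _), mul_zero]
  · have hprod := hw i (c + k i - s)
    rw [heq, sub_self, eq_comm] at hprod
    refine mul_ne_zero ?_ (prod_ne_zero_iff.2 fun j _ => ?_) hprod
    · simpa using Nat.one_le_iff_ne_zero.1 hs₀
    · have hcast : c + (k i : ℂ) - s - (c + k j - ((ν j : ℕ) + 1))
          = ((k i - s - (k j - ν j - 1) : ℤ) : ℂ) := by
        push_cast; ring
      rw [hcast, Int.cast_ne_zero, sub_ne_zero]
      exact sub_ne_sub_sub_one_of_gaps hk hν hs₀ hs j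
end

section
/- Let n ≥ 1, r ≥ 0, and 1 ≤ l ≤ n. In the ring ℂ[a_1,…,a_n][t,t^{-1}] of Laurent polynomials in t over ℂ[a_1,…,a_n], the following identity holds: ∂/∂a_l [ (∏_{i=1}^{n}(1 − t·a_i)) · ∑_{k=0}^{r} h_{r−k}(a_1,…,a_n)·t^{−k} ] = − t · (∏_{i≠l}(1 − t·a_i)) · ∑ (p_l + 1)·a_1^{p_1}⋯a_n^{p_n}, where the last sum ranges over all tuples (p_1,…,p_n) of nonnegative integers with p_1 + ⋯ + p_n = r. -/
/-!
Factor `∏ᵢ (1 - t aᵢ) = (1 - t a_l) Q`, where `Q` does not involve `a_l`, and put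
`S_r = ∑_k h_{r-k} t^{-k}`. By the Leibniz rule the left side is
`Q ((1 - t a_l) ∂_l S_r - t S_r)`. Comparing coefficients of monomials gives
`∂_l h_{p+1} = ∑_{|d| = p} (d_l + 1) a^d` and the Euler-type recursion
`a_l ∂_l h_p + h_p = ∂_l h_{p+1}`; the latter yields
`(1 - t a_l) ∂_l S_r = t S_r - t ∂_l h_{r+1}` by induction on `r`.
-/

open MvPolynomial

theorem Finsupp.sum_add_single_one_apply {σ : Type*} [Fintype σ] [DecidableEq σ] (m : σ →₀ ℕ)
    (l : σ) :
    ∑ i, (m + Finsupp.single l 1 : σ →₀ ℕ) i = ∑ i, m i + 1 := by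
  simp [Finset.sum_add_distrib, Finsupp.single_apply]

namespace MvPolynomial

variable {σ R : Type*} [CommSemiring R]

theorem coeff_X_mul_pderiv (i : σ) (p : MvPolynomial σ R) (m : σ →₀ ℕ) :
    coeff m (X i * pderiv i p) = coeff m p * m i := by
  classical
  rw [coeff_X_mul']
  split_ifs with h
  · have hle : Finsupp.single i 1 ≤ m :=
      Finsupp.single_le_iff.mpr (Nat.one_le_iff_ne_zero.mpr (Finsupp.mem_support_iff.mp h))
    rw [coeff_pderiv, tsub_add_cancel_of_le hle, Finsupp.tsub_apply, Finsupp.single_eq_same,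
      ← Nat.cast_add_one, Nat.sub_add_cancel (Finsupp.single_le_iff.mp hle)]
  · rw [Finsupp.notMem_support_iff.mp h, Nat.cast_zero, mul_zero]

theorem prod_X_pow_eq_monomial_equivFunOnFinite [Fintype σ] (d : σ → ℕ) :
    ∏ i, (X i : MvPolynomial σ R) ^ d i = monomial (Finsupp.equivFunOnFinite.symm d) 1 := by
  rw [monomial_eq, C_1, one_mul, Finsupp.prod_fintype _ _ (fun _ => pow_zero _)]
  rfl

theorem coeff_sum_C_mul_prod_X_pow_antidiagonalTuple {n : ℕ} (p : ℕ) (c : (Fin n → ℕ) → R)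
    (m : Fin n →₀ ℕ) :
    coeff m (∑ d ∈ Finset.Nat.antidiagonalTuple n p, C (c d) * ∏ i, X i ^ d i) =
      if ∑ i, m i = p then c m else 0 := by
  classical
  simp_rw [prod_X_pow_eq_monomial_equivFunOnFinite, C_mul_monomial, mul_one, coeff_sum,
    coeff_monomial]
  simp only [Equiv.symm_apply_eq, Finsupp.equivFunOnFinite_apply, Finset.sum_ite_eq',
    Finset.Nat.mem_antidiagonalTuple]
  rfl

theorem coeff_hpoly (n p : ℕ) (m : Fin n →₀ ℕ) :
    coeff m (hpoly n p) = if ∑ i, m i = p then 1 else 0 := by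
  simpa [hpoly] using coeff_sum_C_mul_prod_X_pow_antidiagonalTuple p (fun _ => (1 : ℂ)) m

theorem pderiv_hpoly_succ (n p : ℕ) (l : Fin n) :
    pderiv l (hpoly n (p + 1)) =
      ∑ d ∈ Finset.Nat.antidiagonalTuple n p,
        ((d l + 1 : ℕ) : MvPolynomial (Fin n) ℂ) * ∏ i, X i ^ d i := by
  classical
  ext m
  simp_rw [← map_natCast (C : ℂ →+* MvPolynomial (Fin n) ℂ)]
  rw [coeff_pderiv, coeff_hpoly, coeff_sum_C_mul_prod_X_pow_antidiagonalTuple,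
    Finsupp.sum_add_single_one_apply]
  simp

theorem X_mul_pderiv_hpoly_add_hpoly (n p : ℕ) (l : Fin n) :
    X l * pderiv l (hpoly n p) + hpoly n p = pderiv l (hpoly n (p + 1)) := by
  classical
  ext m
  rw [coeff_add, coeff_X_mul_pderiv, coeff_pderiv, coeff_hpoly, coeff_hpoly,
    Finsupp.sum_add_single_one_apply]
  simp only [add_left_inj]
  split_ifs <;> ring

end MvPolynomial

namespace LaurentPolynomial

open Finset

section Derivation

variable {A R : Type*} [CommSemiring A]

section CommSemiring

variable [CommSemiring R] [Algebra A R] (δ : Derivation A R R) {D : R[T;T⁻¹] →+ R[T;T⁻¹]}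

theorem map_mul_of_map_C_mul_T (hD : ∀ (p : R) (m : ℤ), D (C p * T m) = C (δ p) * T m)
    (f g : R[T;T⁻¹]) : D (f * g) = D f * g + f * D g := by
  induction f using LaurentPolynomial.induction_on' with
  | add f f' hf hf' => rw [add_mul, map_add, map_add, hf, hf']; ring
  | C_mul_T m p =>
    induction g using LaurentPolynomial.induction_on' with
    | add g g' hg hg' => rw [mul_add, map_add, map_add, hg, hg']; ring
    | C_mul_T m' p' =>
      have hprod : C p * T m * (C p' * T m') = C (p * p') * T (m + m') := by
        rw [map_mul, T_add]; ring
      rw [hprod, hD, hD, hD, Derivation.leibniz, smul_eq_mul, smul_eq_mul, map_add, map_mul,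
        map_mul, T_add]
      ring

theorem map_one_of_map_C_mul_T (hD : ∀ (p : R) (m : ℤ), D (C p * T m) = C (δ p) * T m) :
    D 1 = 0 := by
  simpa using hD 1 0

theorem map_prod_eq_zero_of_map_C_mul_T (hD : ∀ (p : R) (m : ℤ), D (C p * T m) = C (δ p) * T m)
    {ι : Type*} (s : Finset ι) (f : ι → R[T;T⁻¹]) (hf : ∀ i ∈ s, D (f i) = 0) :
    D (∏ i ∈ s, f i) = 0 :=
  prod_induction _ (fun x => D x = 0)
    (fun a b ha hb => by rw [map_mul_of_map_C_mul_T δ hD, ha, hb, zero_mul, mul_zero, add_zero])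
    (map_one_of_map_C_mul_T δ hD) hf

theorem map_sum_C_mul_T (hD : ∀ (p : R) (m : ℤ), D (C p * T m) = C (δ p) * T m)
    {ι : Type*} (s : Finset ι) (f : ι → R) (e : ι → ℤ) :
    D (∑ i ∈ s, C (f i) * T (e i)) = ∑ i ∈ s, C (δ (f i)) * T (e i) := by
  rw [map_sum]
  exact sum_congr rfl fun i _ => hD _ _

end CommSemiring

variable [CommRing R] [Algebra A R] (δ : Derivation A R R) {D : R[T;T⁻¹] →+ R[T;T⁻¹]}

theorem map_one_sub_T_mul_C (hD : ∀ (p : R) (m : ℤ), D (C p * T m) = C (δ p) * T m) (x : R) :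
    D (1 - T 1 * C x) = -(C (δ x) * T 1) := by
  rw [map_sub, map_one_of_map_C_mul_T δ hD, T_mul, hD, zero_sub]

theorem map_prod_one_sub_T_mul_C_mul (hD : ∀ (p : R) (m : ℤ), D (C p * T m) = C (δ p) * T m)
    {ι : Type*} [DecidableEq ι] (s : Finset ι) (x : ι → R) {l : ι} (hl : l ∈ s)
    (hx : ∀ i ∈ s, i ≠ l → δ (x i) = 0) (f : R[T;T⁻¹]) :
    D ((∏ i ∈ s, (1 - T 1 * C (x i))) * f) =
      (∏ i ∈ s.erase l, (1 - T 1 * C (x i))) *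
        ((1 - T 1 * C (x l)) * D f - T 1 * C (δ (x l)) * f) := by
  have hrest : D (∏ i ∈ s.erase l, (1 - T 1 * C (x i))) = 0 :=
    map_prod_eq_zero_of_map_C_mul_T δ hD _ _ fun i hi => by
      rw [map_one_sub_T_mul_C δ hD, hx i (mem_of_mem_erase hi) (ne_of_mem_erase hi), map_zero,
        zero_mul, neg_zero]
  rw [← mul_prod_erase s _ hl, map_mul_of_map_C_mul_T δ hD, map_mul_of_map_C_mul_T δ hD,
    map_one_sub_T_mul_C δ hD, hrest]
  ring

end Derivation

variable {R : Type*} [CommRing R]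

theorem sum_range_succ_succ_C_mul_T_neg (g : ℕ → R) (r : ℕ) :
    ∑ k ∈ range (r + 2), C (g (r + 1 - k)) * T (-(k : ℤ)) =
      (∑ k ∈ range (r + 1), C (g (r - k)) * T (-(k : ℤ))) * T (-1) + C (g (r + 1)) := by
  rw [sum_range_succ', sum_mul]
  congr 1
  · refine sum_congr rfl fun k _ => ?_
    rw [mul_assoc, ← T_add, Nat.add_sub_add_right]
    push_cast
    ring_nf
  · simp

theorem one_sub_T_mul_C_mul_sum (x : R) (h u : ℕ → R) (hu : u 0 = 0)
    (hrec : ∀ k, x * u k + h k = u (k + 1)) (r : ℕ) :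
    (1 - T 1 * C x) * ∑ k ∈ range (r + 1), C (u (r - k)) * T (-(k : ℤ)) =
      T 1 * ∑ k ∈ range (r + 1), C (h (r - k)) * T (-(k : ℤ)) - T 1 * C (u (r + 1)) := by
  induction r with
  | zero => simp [hu, ← hrec 0]
  | succ r ih =>
    rw [sum_range_succ_succ_C_mul_T_neg, sum_range_succ_succ_C_mul_T_neg]
    have hT : T (1 : ℤ) * T (-1) = (1 : R[T;T⁻¹]) := by rw [← T_add]; simp
    have hC : C x * C (u (r + 1)) + C (h (r + 1)) = C (u (r + 2)) := by
      rw [← map_mul, ← map_add, hrec]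
    linear_combination T (-1) * ih - C (u (r + 1)) * hT - T 1 * hC

end LaurentPolynomial

theorem stmt15_general (n : ℕ) (r : ℕ) (l : Fin n)
    (D : LaurentPolynomial (MvPolynomial (Fin n) ℂ) →
         LaurentPolynomial (MvPolynomial (Fin n) ℂ))
    (hD : ∀ (p : MvPolynomial (Fin n) ℂ) (m : ℤ),
      D (LaurentPolynomial.C p * LaurentPolynomial.T m) =
        LaurentPolynomial.C (pderiv l p) * LaurentPolynomial.T m)
    (hDadd : ∀ x y, D (x + y) = D x + D y) :
    D ((∏ i : Fin n,
          (1 - LaurentPolynomial.T 1 * LaurentPolynomial.C (X i))) *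
        ∑ k ∈ Finset.range (r + 1),
          LaurentPolynomial.C (hpoly n (r - k)) * LaurentPolynomial.T (-(k : ℤ))) =
      -(LaurentPolynomial.T 1) *
        (∏ i ∈ Finset.univ.erase l,
          (1 - LaurentPolynomial.T 1 * LaurentPolynomial.C (X i))) *
        LaurentPolynomial.C
          (∑ d ∈ Finset.Nat.antidiagonalTuple n r,
            ((d l + 1 : ℕ) : MvPolynomial (Fin n) ℂ) * ∏ i, X i ^ d i) := by
  have h0 : pderiv l (hpoly n 0) = 0 := by
    simp [hpoly, Finset.Nat.antidiagonalTuple_zero_right]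
  change AddMonoidHom.mk' D hDadd _ = _
  rw [LaurentPolynomial.map_prod_one_sub_T_mul_C_mul (pderiv l) hD Finset.univ X
      (Finset.mem_univ l) fun i _ hi => pderiv_X_of_ne hi,
    LaurentPolynomial.map_sum_C_mul_T (pderiv l) hD,
    LaurentPolynomial.one_sub_T_mul_C_mul_sum (X l) (hpoly n) (fun k => pderiv l (hpoly n k)) h0
      (X_mul_pderiv_hpoly_add_hpoly n · l) r,
    pderiv_X_self, map_one, ← pderiv_hpoly_succ]
  ring

/-- In the Laurent polynomial ring in `t` over `ℂ[a_1, …, a_n]`, the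
coefficientwise partial derivative `∂/∂a_l` (encoded as an additive map `D` acting by
`pderiv l` on coefficients) satisfies
`∂/∂a_l [(∏_i (1 - t a_i)) ∑_{k=0}^r h_{r-k}(a) t^{-k}]
  = -t (∏_{i ≠ l} (1 - t a_i)) ∑_{p_1+⋯+p_n=r} (p_l + 1) a_1^{p_1} ⋯ a_n^{p_n}`. -/
theorem stmt15 (n : ℕ) (hn : 1 ≤ n) (r : ℕ) (l : Fin n)
    (D : LaurentPolynomial (MvPolynomial (Fin n) ℂ) →
         LaurentPolynomial (MvPolynomial (Fin n) ℂ))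
    (hD : ∀ (p : MvPolynomial (Fin n) ℂ) (m : ℤ),
      D (LaurentPolynomial.C p * LaurentPolynomial.T m) =
        LaurentPolynomial.C (pderiv l p) * LaurentPolynomial.T m)
    (hDadd : ∀ x y, D (x + y) = D x + D y) :
    D ((∏ i : Fin n,
          (1 - LaurentPolynomial.T 1 * LaurentPolynomial.C (X i))) *
        ∑ k ∈ Finset.range (r + 1),
          LaurentPolynomial.C (hpoly n (r - k)) * LaurentPolynomial.T (-(k : ℤ))) =
      -(LaurentPolynomial.T 1) *
        (∏ i ∈ Finset.univ.erase l,
          (1 - LaurentPolynomial.T 1 * LaurentPolynomial.C (X i))) *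
        LaurentPolynomial.C
          (∑ d ∈ Finset.Nat.antidiagonalTuple n r,
            ((d l + 1 : ℕ) : MvPolynomial (Fin n) ℂ) * ∏ i, X i ^ d i) :=
  stmt15_general n r l D hD hDadd
end
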